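/- arXiv:2605.13389 — 6 statements merged into one kernel-verified Lean document; each statement's English description precedes it below -/
import Mathlib

section
/- Let $d \ge 1$ and $p \in [1,2]$. Then for all $x, y \in \mathbb{R}^d$ one has $\big| |x|^{p-2}x - |y|^{p-2}y \big| \le 2^{2-p}(3-p)\,|x-y|^{p-1}$, where $|\cdot|$ denotes the Euclidean norm. -/
/-! With `q = p - 1 ∈ [0, 1]`, write `a = ‖x‖`, `b = ‖y‖` and let `θ` be the angle between `x` and
`y`. For all scalars `α, β`, `‖α x - β y‖²` is the convex combination, with weight
`t = (1 + cos θ) / 2`, of `(α a - β b)²` and `(α a + β b)²`. Applied to `α = a^(q-1)`, `β = b^(q-1)`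
and to `α = β = 1`, this reduces the claim to the scalar bounds `|a^q - b^q| ≤ |a - b|^q` and
`a^q + b^q ≤ 2^(1-q) (a + b)^q`, glued together by concavity of `s ↦ s^q`. The bound in fact holds
with the smaller constant `2^(2-p)`. -/

open Real InnerProductGeometry

section Scalar

variable {q a b : ℝ}

-- Equality holds except at `a = 0`, `q = 0`, where `0 ^ 0 = 1`.
lemma rpow_sub_one_mul_self_le (ha : 0 ≤ a) : a ^ (q - 1) * a ≤ a ^ q := by
  rcases ha.eq_or_lt with rfl | ha
  · simpa using rpow_nonneg le_rfl q
  · rw [rpow_sub_one ha.ne', div_mul_cancel₀ _ ha.ne']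

lemma abs_rpow_sub_one_mul_self_sub_le (hq0 : 0 ≤ q) (hq1 : q ≤ 1) (ha : 0 ≤ a) (hb : 0 ≤ b) :
    |a ^ (q - 1) * a - b ^ (q - 1) * b| ≤ |a - b| ^ q := by
  wlog hba : b ≤ a generalizing a b
  · rw [abs_sub_comm, abs_sub_comm a]
    exact this hb ha (le_of_not_ge hba)
  rcases hb.eq_or_lt with rfl | hb
  · simpa [abs_of_nonneg ha, abs_of_nonneg (mul_nonneg (rpow_nonneg ha _) ha)]
      using rpow_sub_one_mul_self_le (q := q) ha
  have ha' : a ≠ 0 := (hb.trans_le hba).ne'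
  rw [rpow_sub_one ha', rpow_sub_one hb.ne', div_mul_cancel₀ _ ha', div_mul_cancel₀ _ hb.ne',
    abs_of_nonneg (sub_nonneg.2 (rpow_le_rpow hb.le hba hq0)), abs_of_nonneg (sub_nonneg.2 hba),
    sub_le_iff_le_add]
  simpa using rpow_add_le_add_rpow (sub_nonneg.2 hba) hb.le hq0 hq1

lemma rpow_add_rpow_le_two_rpow_mul_rpow_add (hq0 : 0 ≤ q) (hq1 : q ≤ 1) (ha : 0 ≤ a)
    (hb : 0 ≤ b) : a ^ q + b ^ q ≤ 2 ^ (1 - q) * (a + b) ^ q := by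
  have h : (1 / 2 : ℝ) * a ^ q + 1 / 2 * b ^ q ≤ (1 / 2 * a + 1 / 2 * b) ^ q :=
    (concaveOn_rpow hq0 hq1).2 ha hb (by norm_num) (by norm_num) (by norm_num)
  rw [← mul_add, ← mul_add, mul_rpow (by norm_num) (add_nonneg ha hb), one_div,
    inv_rpow zero_le_two] at h
  rw [rpow_sub zero_lt_two, rpow_one, div_eq_mul_inv, mul_assoc]
  linarith

end Scalar

variable {E : Type*} [NormedAddCommGroup E] [InnerProductSpace ℝ E]

lemma exists_norm_smul_sub_smul_sq_eq (x y : E) : ∃ t ∈ Set.Icc (0 : ℝ) 1, ∀ α β : ℝ,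
    ‖α • x - β • y‖ ^ 2 =
      t * (α * ‖x‖ - β * ‖y‖) ^ 2 + (1 - t) * (α * ‖x‖ + β * ‖y‖) ^ 2 := by
  refine ⟨(1 + cos (angle x y)) / 2, ⟨?_, ?_⟩, fun α β => ?_⟩
  · linarith [neg_one_le_cos (angle x y)]
  · linarith [cos_le_one (angle x y)]
  rw [norm_sub_sq_real, real_inner_smul_left, real_inner_smul_right,
    ← cos_angle_mul_norm_mul_norm, norm_smul, norm_smul, mul_pow, mul_pow, Real.norm_eq_abs,
    Real.norm_eq_abs, sq_abs, sq_abs]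
  ring

theorem norm_rpow_smul_sub_rpow_smul_le {q : ℝ} (hq0 : 0 ≤ q) (hq1 : q ≤ 1) (x y : E) :
    ‖‖x‖ ^ (q - 1) • x - ‖y‖ ^ (q - 1) • y‖ ≤ 2 ^ (1 - q) * ‖x - y‖ ^ q := by
  obtain ⟨t, ⟨ht0, ht1⟩, h⟩ := exists_norm_smul_sub_smul_sq_eq x y
  set a := ‖x‖
  set b := ‖y‖
  set K : ℝ := 2 ^ (1 - q)
  have hφ := h (a ^ (q - 1)) (b ^ (q - 1))
  have hxy : ‖x - y‖ ^ 2 = t * (a - b) ^ 2 + (1 - t) * (a + b) ^ 2 := by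
    simpa only [one_smul, one_mul] using h 1 1
  have hdiff : (a ^ (q - 1) * a - b ^ (q - 1) * b) ^ 2 ≤ ((a - b) ^ 2) ^ q := by
    rw [← sq_abs, ← sq_abs (a - b), ← rpow_pow_comm (abs_nonneg _)]
    exact pow_le_pow_left₀ (abs_nonneg _)
      (abs_rpow_sub_one_mul_self_sub_le hq0 hq1 (norm_nonneg x) (norm_nonneg y)) 2
  have hsum : (a ^ (q - 1) * a + b ^ (q - 1) * b) ^ 2 ≤ K ^ 2 * ((a + b) ^ 2) ^ q := by
    rw [← rpow_pow_comm (by positivity), ← mul_pow]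
    refine pow_le_pow_left₀ (by positivity) ?_ 2
    calc a ^ (q - 1) * a + b ^ (q - 1) * b ≤ a ^ q + b ^ q :=
          add_le_add (rpow_sub_one_mul_self_le (norm_nonneg x))
            (rpow_sub_one_mul_self_le (norm_nonneg y))
      _ ≤ K * (a + b) ^ q :=
          rpow_add_rpow_le_two_rpow_mul_rpow_add hq0 hq1 (norm_nonneg x) (norm_nonneg y)
  have hK : 1 ≤ K ^ 2 := one_le_pow₀ (one_le_rpow one_le_two (by linarith))
  have hconc : t * ((a - b) ^ 2) ^ q + (1 - t) * ((a + b) ^ 2) ^ q ≤ (‖x - y‖ ^ 2) ^ q := by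
    simpa only [smul_eq_mul, hxy] using (concaveOn_rpow hq0 hq1).2 (sq_nonneg (a - b))
      (sq_nonneg (a + b)) ht0 (sub_nonneg.2 ht1) (by ring)
  have hsq : ‖‖x‖ ^ (q - 1) • x - ‖y‖ ^ (q - 1) • y‖ ^ 2 ≤ (K * ‖x - y‖ ^ q) ^ 2 := by
    calc _ ≤ t * ((a - b) ^ 2) ^ q + (1 - t) * (K ^ 2 * ((a + b) ^ 2) ^ q) := by
          rw [hφ]
          gcongr
      _ ≤ K ^ 2 * (t * ((a - b) ^ 2) ^ q + (1 - t) * ((a + b) ^ 2) ^ q) := by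
          have hX : 0 ≤ t * ((a - b) ^ 2) ^ q := mul_nonneg ht0 (rpow_nonneg (sq_nonneg _) q)
          linarith [mul_le_mul_of_nonneg_right hK hX]
      _ ≤ K ^ 2 * (‖x - y‖ ^ 2) ^ q := by gcongr
      _ = (K * ‖x - y‖ ^ q) ^ 2 := by rw [mul_pow, rpow_pow_comm (norm_nonneg _)]
  exact (pow_le_pow_iff_left₀ (norm_nonneg _) (by positivity) two_ne_zero).1 hsq

theorem stmt_1_general (d : ℕ) (p : ℝ) (hp1 : 1 ≤ p) (hp2 : p ≤ 2)
    (x y : EuclideanSpace ℝ (Fin d)) :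
    ‖(‖x‖ ^ (p - 2)) • x - (‖y‖ ^ (p - 2)) • y‖ ≤
      (2 : ℝ) ^ (2 - p) * (3 - p) * ‖x - y‖ ^ (p - 1) := by
  have h := norm_rpow_smul_sub_rpow_smul_le (q := p - 1) (by linarith) (by linarith) x y
  rw [show p - 1 - 1 = p - 2 by ring, show 1 - (p - 1) = 2 - p by ring] at h
  refine h.trans ?_
  gcongr
  exact le_mul_of_one_le_right (by positivity) (by linarith)

/-- For `p ∈ [1,2]` and `x, y ∈ ℝ^d`,
`| |x|^{p-2}x - |y|^{p-2}y | ≤ 2^{2-p}(3-p) |x-y|^{p-1}`.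
(With the real-power convention `0 ^ t = 0` for `t ≠ 0`, the scalar
`‖x‖ ^ (p-2)` times the vector `x` is `0` when `x = 0`.) -/
theorem stmt_1 (d : ℕ) (hd : 1 ≤ d) (p : ℝ) (hp1 : 1 ≤ p) (hp2 : p ≤ 2)
    (x y : EuclideanSpace ℝ (Fin d)) :
    ‖(‖x‖ ^ (p - 2)) • x - (‖y‖ ^ (p - 2)) • y‖ ≤
      (2 : ℝ) ^ (2 - p) * (3 - p) * ‖x - y‖ ^ (p - 1) :=
  stmt_1_general d p hp1 hp2 x y
end

section
/- Let $d \ge 1$ and $p \in [1,2]$. Then for all $x, y \in \mathbb{R}^d$ one has $\big( |x|^{p-2}x - |y|^{p-2}y \big) \cdot (x-y) \ge (p-1)\,|x-y|^{2}\,(|x|+|y|)^{p-2}$, where $\cdot$ is the Euclidean inner product and $|\cdot|$ the Euclidean norm. -/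
open scoped RealInnerProductSpace

private lemma subadd_rpow {q a b : ℝ} (hq0 : 0 ≤ q) (hq1 : q ≤ 1) (ha : 0 ≤ a) (hb : 0 ≤ b) :
    (a + b) ^ q ≤ a ^ q + b ^ q := by
  have h := NNReal.rpow_add_le_add_rpow (⟨a, ha⟩ : NNReal) (⟨b, hb⟩ : NNReal) hq0 hq1
  exact_mod_cast h

private lemma concave_rpow {q a b : ℝ} (hq0 : 0 ≤ q) (hq1 : q ≤ 1) (ha : 0 < a) (hb : 0 ≤ b) :
    q * a ^ (q - 1) * (a - b) ≤ a ^ q - b ^ q := by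
  have hgm := Real.geom_mean_le_arith_mean2_weighted hq0 (by linarith : (0:ℝ) ≤ 1 - q)
      (div_nonneg hb ha.le) zero_le_one (by ring)
  rw [Real.one_rpow, mul_one, mul_one] at hgm
  have hA : 0 < a ^ q := Real.rpow_pos_of_pos ha q
  have hbq : b ^ q = (b / a) ^ q * a ^ q := by
    rw [Real.div_rpow hb ha.le, div_mul_cancel₀ _ (ne_of_gt hA)]
  have h1 : a ^ (q - 1) = a ^ q / a := by rw [Real.rpow_sub ha, Real.rpow_one]
  rw [h1, hbq]
  have h3 : q * (a ^ q / a) * (a - b) = (q * (1 - b / a)) * a ^ q := by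
    field_simp
  rw [h3]
  nlinarith [mul_le_mul_of_nonneg_right hgm hA.le]

private lemma eminus_aux {p a b : ℝ} (hp1 : 1 ≤ p) (hp2 : p ≤ 2) (hb : 0 ≤ b) (hba : b ≤ a) :
    (p - 1) * (a - b) ^ 2 * (a + b) ^ (p - 2) ≤
      a ^ (p - 2) * a ^ 2 + b ^ (p - 2) * b ^ 2 - (a ^ (p - 2) + b ^ (p - 2)) * (a * b) := by
  have ha : 0 ≤ a := hb.trans hba
  rcases eq_or_lt_of_le hb with hb0 | hb0
  · -- b = 0
    rcases eq_or_lt_of_le ha with ha0 | ha0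
    · rw [← hb0, ← ha0]; norm_num
    · rw [← hb0]
      have hX : 0 ≤ a ^ (p - 2) * a ^ 2 :=
        mul_nonneg (Real.rpow_nonneg ha _) (sq_nonneg a)
      have h2 : (0:ℝ) ≤ (2 - p) * (a ^ (p - 2) * a ^ 2) :=
        mul_nonneg (by linarith) hX
      norm_num
      nlinarith [h2]
  · -- 0 < b ≤ a
    have ha0 : 0 < a := lt_of_lt_of_le hb0 hba
    have hkey := concave_rpow (q := p - 1) (by linarith) (by linarith) ha0 hb
    have hmono : (a + b) ^ (p - 1 - 1) ≤ a ^ (p - 1 - 1) :=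
      Real.rpow_le_rpow_of_nonpos ha0 (by linarith) (by linarith)
    have hab : 0 ≤ a - b := by linarith
    have hq : 0 ≤ p - 1 := by linarith
    -- chain : (p-1) * (a+b)^(p-2) * (a-b) ≤ a^(p-1) - b^(p-1)
    have hchain : (p - 1) * (a + b) ^ (p - 1 - 1) * (a - b) ≤ a ^ (p - 1) - b ^ (p - 1) := by
      refine le_trans ?_ hkey
      have := mul_le_mul_of_nonneg_left hmono hq
      exact mul_le_mul_of_nonneg_right this hab
    have hmul := mul_le_mul_of_nonneg_right hchain hab
    -- identities
    have e1 : a ^ (p - 2) * a ^ 2 = a ^ (p - 1) * a := by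
      rw [show (p:ℝ) - 1 = (p - 2) + 1 by ring, Real.rpow_add_one (ne_of_gt ha0)]; ring
    have e2 : b ^ (p - 2) * b ^ 2 = b ^ (p - 1) * b := by
      rw [show (p:ℝ) - 1 = (p - 2) + 1 by ring, Real.rpow_add_one (ne_of_gt hb0)]; ring
    have e3 : a ^ (p - 2) * (a * b) = a ^ (p - 1) * b := by
      rw [show (p:ℝ) - 1 = (p - 2) + 1 by ring, Real.rpow_add_one (ne_of_gt ha0)]; ring
    have e4 : b ^ (p - 2) * (a * b) = b ^ (p - 1) * a := by
      rw [show (p:ℝ) - 1 = (p - 2) + 1 by ring, Real.rpow_add_one (ne_of_gt hb0)]; ring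
    have e5 : p - 1 - 1 = p - 2 := by ring
    rw [e5] at hmul
    nlinarith [hmul, e1, e2, e3, e4]

private lemma eplus_aux {p a b : ℝ} (hp1 : 1 ≤ p) (hp2 : p ≤ 2) (ha : 0 ≤ a) (hb : 0 ≤ b) :
    (p - 1) * (a + b) ^ 2 * (a + b) ^ (p - 2) ≤
      a ^ (p - 2) * a ^ 2 + b ^ (p - 2) * b ^ 2 + (a ^ (p - 2) + b ^ (p - 2)) * (a * b) := by
  rcases eq_or_lt_of_le ha with ha0 | ha0
  · rw [← ha0]
    have hX : 0 ≤ b ^ (p - 2) * b ^ 2 := mul_nonneg (Real.rpow_nonneg hb _) (sq_nonneg b)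
    have h2 : (0:ℝ) ≤ (2 - p) * (b ^ (p - 2) * b ^ 2) := mul_nonneg (by linarith) hX
    norm_num
    nlinarith [h2]
  rcases eq_or_lt_of_le hb with hb0 | hb0
  · rw [← hb0]
    have hX : 0 ≤ a ^ (p - 2) * a ^ 2 := mul_nonneg (Real.rpow_nonneg ha _) (sq_nonneg a)
    have h2 : (0:ℝ) ≤ (2 - p) * (a ^ (p - 2) * a ^ 2) := mul_nonneg (by linarith) hX
    norm_num
    nlinarith [h2]
  · have hab : 0 < a + b := by linarith
    have hsub := subadd_rpow (q := p - 1) (by linarith) (by linarith) ha hb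
    have e1 : a ^ (p - 2) * a ^ 2 = a ^ (p - 1) * a := by
      rw [show (p:ℝ) - 1 = (p - 2) + 1 by ring, Real.rpow_add_one (ne_of_gt ha0)]; ring
    have e2 : b ^ (p - 2) * b ^ 2 = b ^ (p - 1) * b := by
      rw [show (p:ℝ) - 1 = (p - 2) + 1 by ring, Real.rpow_add_one (ne_of_gt hb0)]; ring
    have e3 : a ^ (p - 2) * (a * b) = a ^ (p - 1) * b := by
      rw [show (p:ℝ) - 1 = (p - 2) + 1 by ring, Real.rpow_add_one (ne_of_gt ha0)]; ring
    have e4 : b ^ (p - 2) * (a * b) = b ^ (p - 1) * a := by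
      rw [show (p:ℝ) - 1 = (p - 2) + 1 by ring, Real.rpow_add_one (ne_of_gt hb0)]; ring
    have e5 : (a + b) ^ 2 * (a + b) ^ (p - 2) = (a + b) ^ (p - 1) * (a + b) := by
      rw [show (p:ℝ) - 1 = (p - 2) + 1 by ring, Real.rpow_add_one (ne_of_gt hab)]; ring
    have hq1 : p - 1 ≤ 1 := by linarith
    have hq0 : 0 ≤ p - 1 := by linarith
    have hABn : 0 ≤ a ^ (p - 1) + b ^ (p - 1) :=
      add_nonneg (Real.rpow_nonneg ha _) (Real.rpow_nonneg hb _)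
    have key : (p - 1) * ((a + b) ^ (p - 1) * (a + b)) ≤
        (a ^ (p - 1) + b ^ (p - 1)) * (a + b) := by
      have h1 : (p - 1) * (a + b) ^ (p - 1) ≤ a ^ (p - 1) + b ^ (p - 1) := by
        nlinarith [Real.rpow_nonneg (le_of_lt hab) (p - 1), hsub]
      nlinarith [mul_le_mul_of_nonneg_right h1 hab.le]
    nlinarith [key, e1, e2, e3, e4, e5]

private lemma master_aux {p a b t : ℝ} (hp1 : 1 ≤ p) (hp2 : p ≤ 2) (ha : 0 ≤ a) (hb : 0 ≤ b)
    (ht : |t| ≤ a * b) :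
    (p - 1) * (a ^ 2 + b ^ 2 - 2 * t) * (a + b) ^ (p - 2) ≤
      a ^ (p - 2) * a ^ 2 + b ^ (p - 2) * b ^ 2 - (a ^ (p - 2) + b ^ (p - 2)) * t := by
  obtain ⟨ht1, ht2⟩ := abs_le.mp ht
  have Em : (p - 1) * (a - b) ^ 2 * (a + b) ^ (p - 2) ≤
      a ^ (p - 2) * a ^ 2 + b ^ (p - 2) * b ^ 2 - (a ^ (p - 2) + b ^ (p - 2)) * (a * b) := by
    rcases le_total b a with h | h
    · exact eminus_aux hp1 hp2 hb h
    · have h2 := eminus_aux (a := b) (b := a) hp1 hp2 ha h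
      rw [show (b - a) ^ 2 = (a - b) ^ 2 by ring, add_comm b a] at h2
      linarith [h2]
  have Ep := eplus_aux (a := a) (b := b) hp1 hp2 ha hb
  rcases le_total (2 * ((p - 1) * (a + b) ^ (p - 2))) (a ^ (p - 2) + b ^ (p - 2)) with hc | hc
  · have hcn : 2 * ((p - 1) * (a + b) ^ (p - 2)) - (a ^ (p - 2) + b ^ (p - 2)) ≤ 0 := by
      linarith
    have hmul := mul_le_mul_of_nonpos_left ht2 hcn
    nlinarith [Em, hmul]
  · have hcn : 0 ≤ 2 * ((p - 1) * (a + b) ^ (p - 2)) - (a ^ (p - 2) + b ^ (p - 2)) := by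
      linarith
    have hmul := mul_le_mul_of_nonneg_left ht1 hcn
    nlinarith [Ep, hmul]


/-- For `p ∈ [1,2]` and `x, y ∈ ℝ^d`,
`( |x|^{p-2}x - |y|^{p-2}y ) · (x-y) ≥ (p-1) |x-y|² (|x|+|y|)^{p-2}`. -/
theorem stmt_3 (d : ℕ) (hd : 1 ≤ d) (p : ℝ) (hp1 : 1 ≤ p) (hp2 : p ≤ 2)
    (x y : EuclideanSpace ℝ (Fin d)) :
    (p - 1) * ‖x - y‖ ^ 2 * (‖x‖ + ‖y‖) ^ (p - 2) ≤
      ⟪(‖x‖ ^ (p - 2)) • x - (‖y‖ ^ (p - 2)) • y, x - y⟫ := by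
  have hinner : ⟪(‖x‖ ^ (p - 2)) • x - (‖y‖ ^ (p - 2)) • y, x - y⟫ =
      ‖x‖ ^ (p - 2) * ‖x‖ ^ 2 + ‖y‖ ^ (p - 2) * ‖y‖ ^ 2 -
        (‖x‖ ^ (p - 2) + ‖y‖ ^ (p - 2)) * ⟪x, y⟫ := by
    simp only [inner_sub_left, inner_sub_right, real_inner_smul_left,
      real_inner_self_eq_norm_sq, real_inner_comm y x]
    ring
  have hns : ‖x - y‖ ^ 2 = ‖x‖ ^ 2 + ‖y‖ ^ 2 - 2 * ⟪x, y⟫ := by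
    rw [norm_sub_sq_real]; ring
  rw [hinner, hns]
  exact master_aux hp1 hp2 (norm_nonneg x) (norm_nonneg y) (abs_real_inner_le_norm x y)
end

section
/- Let $d \ge 1$ and $p \in [2,\infty)$. Set $\kappa'_p = \min(2^{-1}, 2^{2-p})$, $\kappa_p = p-1$ and $c_p = 2^{p(p-2)/2}\kappa_p^{p/2}$. Let $k : \mathbb{R}^d \times \mathbb{R}^d \to [0,\infty)$ be measurable and $u, v : \mathbb{R}^d \to \mathbb{R}$ measurable with $\mathcal{E}_k(u,u) < \infty$ and $\mathcal{E}_k(v,v) < \infty$. Then $\mathcal{E}_k(u-v,u-v) < \infty$, the quantity $D := \mathcal{E}_k(u,u-v) - \mathcal{E}_k(v,u-v)$ is well defined and nonnegative, and $D \ge \kappa'_p\, \mathcal{E}_k(u-v,u-v)$ as well as $D^{p/2} \le c_p\, \mathcal{E}_k(u-v,u-v)\,\big(\mathcal{E}_k(u,u) + \mathcal{E}_k(v,v)\big)^{(p-2)/2}$. -/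
/-!
With `φ(t) = |t|^(p-2) t`, `A = |a|^(p-2)` and `B = |b|^(p-2)`, everything comes from two pointwise
bounds, integrated against `k`. From below, `(φ a - φ b)(a - b) ≥ ½ (A + B)(a - b)²`, and
`|a - b|^(p-2) ≤ max(1, 2^(p-3)) (A + B)` turns this into `(φ a - φ b)(a - b) ≥ κ'_p |a - b|^p`.
From above, the mean value theorem gives `(φ a - φ b)(a - b) ≤ (p - 1)(|a| + |b|)^(p-2) (a - b)²`;
Hölder's inequality for the measure `k dx dy` with exponents `p/2` and `p/(p-2)` bounds its
integral by `(p - 1) 𝓔(u - v)^(2/p) (∫∫ (|a| + |b|)^p k)^((p-2)/p)`, and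
`(|a| + |b|)^p ≤ 2^p (|a|^p + |b|^p)`.
-/

open MeasureTheory

/-- The nonlocal form `𝓔_k(u,v)` over `ℝ^d × ℝ^d` (product Lebesgue measure). -/
noncomputable def nlForm (d : ℕ) (p : ℝ)
    (k : EuclideanSpace ℝ (Fin d) → EuclideanSpace ℝ (Fin d) → ℝ)
    (u v : EuclideanSpace ℝ (Fin d) → ℝ) : ℝ :=
  ∫ z : EuclideanSpace ℝ (Fin d) × EuclideanSpace ℝ (Fin d),
    |u z.1 - u z.2| ^ (p - 2) * (u z.1 - u z.2) * (v z.1 - v z.2) * k z.1 z.2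

/-- The (finite) energy `𝓔_k(u,u) = ∫∫ |u(x)-u(y)|^p k(x,y)` as a real number. -/
noncomputable def nlDiag (d : ℕ) (p : ℝ)
    (k : EuclideanSpace ℝ (Fin d) → EuclideanSpace ℝ (Fin d) → ℝ)
    (u : EuclideanSpace ℝ (Fin d) → ℝ) : ℝ :=
  ∫ z : EuclideanSpace ℝ (Fin d) × EuclideanSpace ℝ (Fin d),
    |u z.1 - u z.2| ^ p * k z.1 z.2

open Real Set Topology

noncomputable def signedRpow (p t : ℝ) : ℝ := |t| ^ (p - 2) * t

section Pointwise

variable {p : ℝ}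

lemma rpow_sub_two_mul_sq {x : ℝ} (hx : 0 ≤ x) (hp : p ≠ 0) : x ^ (p - 2) * x ^ 2 = x ^ p := by
  rw [← rpow_natCast, ← rpow_add' hx (by norm_num; exact hp)]
  norm_num

lemma add_rpow_le_two_rpow_sub_one_mul {x y : ℝ} (hx : 0 ≤ x) (hy : 0 ≤ y) (hp : 1 ≤ p) :
    (x + y) ^ p ≤ 2 ^ (p - 1) * (x ^ p + y ^ p) := by
  lift x to NNReal using hx
  lift y to NNReal using hy
  exact_mod_cast NNReal.rpow_add_le_mul_rpow_add_rpow x y hp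

lemma add_rpow_le_two_rpow_mul {x y : ℝ} (hx : 0 ≤ x) (hy : 0 ≤ y) (hp : 1 ≤ p) :
    (x + y) ^ p ≤ 2 ^ p * (x ^ p + y ^ p) :=
  (add_rpow_le_two_rpow_sub_one_mul hx hy hp).trans <| mul_le_mul_of_nonneg_right
    (rpow_le_rpow_of_exponent_le one_le_two (by linarith)) (by positivity)

lemma abs_signedRpow_mul_le (hp : 1 < p) (s t : ℝ) : |signedRpow p s * t| ≤ |s| ^ p + |t| ^ p := by
  have hs : |s| ^ (p - 2) * |s| = |s| ^ (p - 1) := by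
    rw [← rpow_add_one' (abs_nonneg s) (by linarith)]; ring_nf
  rw [signedRpow, abs_mul, abs_mul, abs_of_nonneg (rpow_nonneg (abs_nonneg s) _), hs]
  have hsp := rpow_nonneg (abs_nonneg s) p
  have htp := rpow_nonneg (abs_nonneg t) p
  rcases le_total |t| |s| with h | h
  · calc |s| ^ (p - 1) * |t| ≤ |s| ^ (p - 1) * |s| :=
          mul_le_mul_of_nonneg_left h (rpow_nonneg (abs_nonneg s) _)
      _ = |s| ^ p := by rw [← rpow_add_one' (abs_nonneg s) (by linarith)]; ring_nf
      _ ≤ _ := by linarith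
  · calc |s| ^ (p - 1) * |t| ≤ |t| ^ (p - 1) * |t| :=
          mul_le_mul_of_nonneg_right (rpow_le_rpow (abs_nonneg s) h (by linarith)) (abs_nonneg t)
      _ = |t| ^ p := by rw [← rpow_add_one' (abs_nonneg t) (by linarith)]; ring_nf
      _ ≤ _ := by linarith

lemma half_add_mul_sq_le_signedRpow_sub_mul_sub (hp : 2 ≤ p) (a b : ℝ) :
    (|a| ^ (p - 2) + |b| ^ (p - 2)) / 2 * (a - b) ^ 2 ≤
      (signedRpow p a - signedRpow p b) * (a - b) := by
  -- `(φ a - φ b)(a - b) = ½ (A + B)(a - b)² + ½ (A - B)(a² - b²)`, and `A - B`, `a² - b²`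
  -- both have the sign of `|a| - |b|`.
  have hcross : 0 ≤ (|a| ^ (p - 2) - |b| ^ (p - 2)) * (a ^ 2 - b ^ 2) := by
    rw [← sq_abs a, ← sq_abs b]
    rcases le_total |a| |b| with h | h
    · exact mul_nonneg_of_nonpos_of_nonpos
        (sub_nonpos.2 (rpow_le_rpow (abs_nonneg a) h (by linarith)))
        (sub_nonpos.2 (pow_le_pow_left₀ (abs_nonneg a) h 2))
    · exact mul_nonneg (sub_nonneg.2 (rpow_le_rpow (abs_nonneg b) h (by linarith)))
        (sub_nonneg.2 (pow_le_pow_left₀ (abs_nonneg b) h 2))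
  have hsplit : (signedRpow p a - signedRpow p b) * (a - b) =
      (|a| ^ (p - 2) + |b| ^ (p - 2)) / 2 * (a - b) ^ 2 +
        (|a| ^ (p - 2) - |b| ^ (p - 2)) * (a ^ 2 - b ^ 2) / 2 := by
    unfold signedRpow; ring
  linarith

lemma min_mul_abs_sub_rpow_le (hp : 2 ≤ p) (a b : ℝ) :
    min 2⁻¹ ((2 : ℝ) ^ (2 - p)) * |a - b| ^ p ≤ (signedRpow p a - signedRpow p b) * (a - b) := by
  have hsub : |a - b| ^ (p - 2) ≤ (|a| + |b|) ^ (p - 2) :=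
    rpow_le_rpow (abs_nonneg _) (abs_sub _ _) (by linarith)
  have hA := rpow_nonneg (abs_nonneg a) (p - 2)
  have hB := rpow_nonneg (abs_nonneg b) (p - 2)
  have hsub0 := rpow_nonneg (abs_nonneg (a - b)) (p - 2)
  have hmin : min 2⁻¹ ((2 : ℝ) ^ (2 - p)) * |a - b| ^ (p - 2) ≤
      (|a| ^ (p - 2) + |b| ^ (p - 2)) / 2 := by
    rcases le_total p 3 with h3 | h3
    · have := rpow_add_le_add_rpow (abs_nonneg a) (abs_nonneg b) (by linarith : 0 ≤ p - 2)
        (by linarith)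
      calc _ ≤ 2⁻¹ * |a - b| ^ (p - 2) :=
            mul_le_mul_of_nonneg_right (min_le_left _ _) hsub0
        _ ≤ _ := by linarith
    · have := add_rpow_le_two_rpow_sub_one_mul (abs_nonneg a) (abs_nonneg b)
        (by linarith : 1 ≤ p - 2)
      calc _ ≤ (2 : ℝ) ^ (2 - p) * (2 ^ (p - 2 - 1) * (|a| ^ (p - 2) + |b| ^ (p - 2))) :=
            mul_le_mul (min_le_right _ _) (hsub.trans this) hsub0 (by positivity)
        _ = _ := by
            rw [← mul_assoc, ← rpow_add two_pos, show 2 - p + (p - 2 - 1) = -1 by ring,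
              rpow_neg_one]
            ring
  calc min 2⁻¹ ((2 : ℝ) ^ (2 - p)) * |a - b| ^ p
      = min 2⁻¹ ((2 : ℝ) ^ (2 - p)) * |a - b| ^ (p - 2) * (a - b) ^ 2 := by
        rw [mul_assoc, ← sq_abs (a - b), rpow_sub_two_mul_sq (abs_nonneg _) (by linarith)]
    _ ≤ (|a| ^ (p - 2) + |b| ^ (p - 2)) / 2 * (a - b) ^ 2 :=
        mul_le_mul_of_nonneg_right hmin (sq_nonneg _)
    _ ≤ _ := half_add_mul_sq_le_signedRpow_sub_mul_sub hp a b

lemma signedRpow_neg (t : ℝ) : signedRpow p (-t) = -signedRpow p t := by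
  simp [signedRpow]

lemma hasDerivAt_signedRpow_of_pos {t : ℝ} (ht : 0 < t) :
    HasDerivAt (signedRpow p) ((p - 1) * |t| ^ (p - 2)) t := by
  have heq : (fun s => s ^ (p - 1)) =ᶠ[𝓝 t] signedRpow p := by
    filter_upwards [Ioi_mem_nhds ht] with s hs
    rw [signedRpow, abs_of_pos hs, ← rpow_add_one hs.ne']
    ring_nf
  have h := hasDerivAt_rpow_const (p := p - 1) (Or.inl ht.ne')
  rw [abs_of_pos ht, show p - 2 = p - 1 - 1 by ring]
  exact h.congr_of_eventuallyEq heq.symm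

lemma hasDerivAt_signedRpow (hp : 2 < p) (t : ℝ) :
    HasDerivAt (signedRpow p) ((p - 1) * |t| ^ (p - 2)) t := by
  rcases lt_trichotomy t 0 with ht | rfl | ht
  · have h := ((hasDerivAt_signedRpow_of_pos (p := p) (neg_pos.2 ht)).comp t
      (hasDerivAt_neg t)).neg
    have hodd : -signedRpow p ∘ Neg.neg = signedRpow p := by
      ext s; simp [signedRpow_neg]
    rw [hodd, abs_neg] at h
    simpa using h
  · rw [hasDerivAt_iff_tendsto_slope_zero]
    have hslope : (fun s : ℝ => |s| ^ (p - 2)) =ᶠ[𝓝[≠] 0]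
        fun s => s⁻¹ • (signedRpow p (0 + s) - signedRpow p 0) := by
      filter_upwards [self_mem_nhdsWithin] with s (hs : s ≠ 0)
      simp only [signedRpow, zero_add, abs_zero, mul_zero, sub_zero, smul_eq_mul]
      field_simp
    have hcont : ContinuousAt (fun s : ℝ => |s| ^ (p - 2)) 0 :=
      (continuousAt_rpow_const _ _ (Or.inr (by linarith))).comp continuous_abs.continuousAt
    simpa [zero_rpow (by linarith : p - 2 ≠ 0)] using
      (hcont.tendsto.mono_left nhdsWithin_le_nhds).congr' hslope
  · exact hasDerivAt_signedRpow_of_pos ht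

lemma abs_signedRpow_sub_le (hp : 2 < p) (a b : ℝ) :
    |signedRpow p a - signedRpow p b| ≤ (p - 1) * (|a| + |b|) ^ (p - 2) * |a - b| := by
  set M := |a| + |b|
  have hmem : ∀ x, |x| ≤ M → x ∈ Icc (-M) M := fun x hx => abs_le.1 hx
  have bound : ∀ x ∈ Icc (-M) M, ‖(p - 1) * |x| ^ (p - 2)‖ ≤ (p - 1) * M ^ (p - 2) := by
    intro x hx
    rw [norm_of_nonneg (mul_nonneg (by linarith) (rpow_nonneg (abs_nonneg x) _))]
    exact mul_le_mul_of_nonneg_left (rpow_le_rpow (abs_nonneg x) (abs_le.2 hx) (by linarith))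
      (by linarith)
  simpa [← Real.norm_eq_abs] using (convex_Icc (-M) M).norm_image_sub_le_of_norm_hasDerivWithin_le
    (fun x _ => (hasDerivAt_signedRpow hp x).hasDerivWithinAt) bound
    (hmem b (le_add_of_nonneg_left (abs_nonneg a))) (hmem a (le_add_of_nonneg_right (abs_nonneg b)))

lemma signedRpow_sub_mul_sub_le (hp : 2 ≤ p) (a b : ℝ) :
    (signedRpow p a - signedRpow p b) * (a - b) ≤
      (p - 1) * ((a - b) ^ 2 * (|a| + |b|) ^ (p - 2)) := by
  rcases hp.eq_or_lt with rfl | hp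
  · norm_num [signedRpow, sq]
  calc (signedRpow p a - signedRpow p b) * (a - b)
      ≤ |signedRpow p a - signedRpow p b| * |a - b| := by rw [← abs_mul]; exact le_abs_self _
    _ ≤ (p - 1) * (|a| + |b|) ^ (p - 2) * |a - b| * |a - b| :=
        mul_le_mul_of_nonneg_right (abs_signedRpow_sub_le hp a b) (abs_nonneg _)
    _ = (p - 1) * ((a - b) ^ 2 * (|a| + |b|) ^ (p - 2)) := by
        rw [mul_assoc _ |a - b|, abs_mul_abs_self, sq]; ring

end Pointwise

section Weighted

variable {α : Type*} [MeasurableSpace α] {μ : Measure α}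

lemma memLp_ofReal_of_integrable_rpow {r : ℝ} (hr : 0 < r) {F : α → ℝ} (hF : Measurable F)
    (hF0 : ∀ z, 0 ≤ F z) (hFi : Integrable (fun z => F z ^ r) μ) :
    MemLp F (ENNReal.ofReal r) μ := by
  refine (integrable_norm_rpow_iff hF.aestronglyMeasurable (by simpa using hr)
    ENNReal.ofReal_ne_top).1 ?_
  simpa [ENNReal.toReal_ofReal hr.le, norm_of_nonneg (hF0 _)] using hFi

theorem integral_mul_mul_le_of_holderConjugate {r q : ℝ} (hrq : r.HolderConjugate q)
    {F G K : α → ℝ} (hF : Measurable F) (hG : Measurable G) (hK : Measurable K)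
    (hF0 : ∀ z, 0 ≤ F z) (hG0 : ∀ z, 0 ≤ G z) (hK0 : ∀ z, 0 ≤ K z)
    (hFi : Integrable (fun z => F z ^ r * K z) μ) (hGi : Integrable (fun z => G z ^ q * K z) μ) :
    ∫ z, F z * G z * K z ∂μ ≤
      (∫ z, F z ^ r * K z ∂μ) ^ (1 / r) * (∫ z, G z ^ q * K z ∂μ) ^ (1 / q) := by
  -- Hölder for `F K^(1/r)` and `G K^(1/q)`.
  have hpow : ∀ {s : ℝ} {H : α → ℝ}, 0 < s → (∀ z, 0 ≤ H z) →
      (fun z => (H z * K z ^ (1 / s)) ^ s) = fun z => H z ^ s * K z := by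
    intro s H hs hH0
    ext z
    rw [mul_rpow (hH0 z) (rpow_nonneg (hK0 z) _), ← rpow_mul (hK0 z), one_div_mul_cancel hs.ne',
      rpow_one]
  have hprod : ∀ z, F z * K z ^ (1 / r) * (G z * K z ^ (1 / q)) = F z * G z * K z := by
    intro z
    rw [mul_mul_mul_comm, ← rpow_add' (hK0 z) (by rw [hrq.one_div_add_one_div]; norm_num),
      hrq.one_div_add_one_div, one_div_one, rpow_one]
  have h := integral_mul_le_Lp_mul_Lq_of_nonneg hrq
    (ae_of_all _ fun z => mul_nonneg (hF0 z) (rpow_nonneg (hK0 z) (1 / r)))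
    (ae_of_all _ fun z => mul_nonneg (hG0 z) (rpow_nonneg (hK0 z) (1 / q)))
    (memLp_ofReal_of_integrable_rpow hrq.pos (by fun_prop)
      (fun z => mul_nonneg (hF0 z) (rpow_nonneg (hK0 z) _)) (by rwa [hpow hrq.pos hF0]))
    (memLp_ofReal_of_integrable_rpow hrq.symm.pos (by fun_prop)
      (fun z => mul_nonneg (hG0 z) (rpow_nonneg (hK0 z) _)) (by rwa [hpow hrq.symm.pos hG0]))
  simpa only [hprod, hpow hrq.pos hF0, hpow hrq.symm.pos hG0] using h

lemma integral_sq_mul_rpow_mul_le {p : ℝ} (hp : 2 ≤ p) {w s K : α → ℝ} (hw : Measurable w)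
    (hs : Measurable s) (hK : Measurable K) (hs0 : ∀ z, 0 ≤ s z) (hK0 : ∀ z, 0 ≤ K z)
    (hwi : Integrable (fun z => |w z| ^ p * K z) μ) (hsi : Integrable (fun z => s z ^ p * K z) μ) :
    ∫ z, w z ^ 2 * s z ^ (p - 2) * K z ∂μ ≤
      (∫ z, |w z| ^ p * K z ∂μ) ^ (2 / p) * (∫ z, s z ^ p * K z ∂μ) ^ ((p - 2) / p) := by
  rcases hp.eq_or_lt with rfl | hp
  · norm_num [rpow_two]
  have hrq : (p / 2).HolderConjugate (p / (p - 2)) :=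
    (holderConjugate_iff_eq_conjExponent (by linarith)).2 (by field_simp)
  have hw2 : (fun z => (w z ^ 2) ^ (p / 2) * K z) = fun z => |w z| ^ p * K z := by
    ext z
    rw [← sq_abs, ← rpow_natCast, ← rpow_mul (abs_nonneg _)]
    congr 2
    push_cast
    ring
  have hsq : (fun z => (s z ^ (p - 2)) ^ (p / (p - 2)) * K z) = fun z => s z ^ p * K z := by
    ext z
    rw [← rpow_mul (hs0 z), mul_div_cancel₀ _ (by linarith : p - 2 ≠ 0)]
  have h := integral_mul_mul_le_of_holderConjugate hrq (hw.pow_const 2) (hs.pow_const (p - 2)) hK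
    (fun z => sq_nonneg (w z)) (fun z => rpow_nonneg (hs0 z) _) hK0 (by rwa [hw2]) (by rwa [hsq])
  rwa [hw2, hsq, one_div_div, one_div_div] at h

end Weighted

/-- On `α = ℝ^d × ℝ^d` with `K z = k z.1 z.2`, `pForm volume p K (fun z => u z.1 - u z.2)
(fun z => v z.1 - v z.2)` is `nlForm d p k u v` by definition; likewise `pEnergy` and `nlDiag`. -/
noncomputable def pForm {α : Type*} [MeasurableSpace α] (μ : Measure α) (p : ℝ) (K f h : α → ℝ) :
    ℝ :=
  ∫ z, signedRpow p (f z) * h z * K z ∂μ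

noncomputable def pEnergy {α : Type*} [MeasurableSpace α] (μ : Measure α) (p : ℝ) (K f : α → ℝ) :
    ℝ :=
  ∫ z, |f z| ^ p * K z ∂μ

section Form

variable {α : Type*} [MeasurableSpace α] {μ : Measure α} {p : ℝ} {K f g h : α → ℝ}

lemma pEnergy_nonneg (hK0 : ∀ z, 0 ≤ K z) : 0 ≤ pEnergy μ p K f :=
  integral_nonneg fun z => mul_nonneg (rpow_nonneg (abs_nonneg _) _) (hK0 z)

lemma integrable_abs_add_abs_rpow_mul (hp : 1 ≤ p) (hf : Measurable f) (hg : Measurable g)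
    (hK : Measurable K) (hK0 : ∀ z, 0 ≤ K z) (hEf : Integrable (fun z => |f z| ^ p * K z) μ)
    (hEg : Integrable (fun z => |g z| ^ p * K z) μ) :
    Integrable (fun z => (|f z| + |g z|) ^ p * K z) μ := by
  refine ((hEf.add hEg).const_mul (2 ^ p)).mono' (by fun_prop) (ae_of_all _ fun z => ?_)
  rw [norm_of_nonneg (mul_nonneg (rpow_nonneg (by positivity) _) (hK0 z)), Pi.add_apply,
    ← add_mul, ← mul_assoc]
  exact mul_le_mul_of_nonneg_right (add_rpow_le_two_rpow_mul (abs_nonneg _) (abs_nonneg _) hp)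
    (hK0 z)

lemma integral_abs_add_abs_rpow_mul_le (hp : 1 ≤ p) (hf : Measurable f) (hg : Measurable g)
    (hK : Measurable K) (hK0 : ∀ z, 0 ≤ K z) (hEf : Integrable (fun z => |f z| ^ p * K z) μ)
    (hEg : Integrable (fun z => |g z| ^ p * K z) μ) :
    ∫ z, (|f z| + |g z|) ^ p * K z ∂μ ≤ 2 ^ p * (pEnergy μ p K f + pEnergy μ p K g) := by
  rw [pEnergy, pEnergy, ← integral_add hEf hEg, ← integral_const_mul]
  refine integral_mono (integrable_abs_add_abs_rpow_mul hp hf hg hK hK0 hEf hEg)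
    ((hEf.add hEg).const_mul _) fun z => ?_
  calc (|f z| + |g z|) ^ p * K z ≤ 2 ^ p * (|f z| ^ p + |g z| ^ p) * K z :=
        mul_le_mul_of_nonneg_right (add_rpow_le_two_rpow_mul (abs_nonneg _) (abs_nonneg _) hp)
          (hK0 z)
    _ = 2 ^ p * (|f z| ^ p * K z + |g z| ^ p * K z) := by ring

lemma integrable_abs_sub_rpow_mul (hp : 1 ≤ p) (hf : Measurable f) (hg : Measurable g)
    (hK : Measurable K) (hK0 : ∀ z, 0 ≤ K z) (hEf : Integrable (fun z => |f z| ^ p * K z) μ)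
    (hEg : Integrable (fun z => |g z| ^ p * K z) μ) :
    Integrable (fun z => |(f - g) z| ^ p * K z) μ := by
  refine (integrable_abs_add_abs_rpow_mul hp hf hg hK hK0 hEf hEg).mono' (by fun_prop)
    (ae_of_all _ fun z => ?_)
  rw [norm_of_nonneg (mul_nonneg (rpow_nonneg (abs_nonneg _) _) (hK0 z))]
  exact mul_le_mul_of_nonneg_right
    (rpow_le_rpow (abs_nonneg _) (abs_sub (f z) (g z)) (by linarith)) (hK0 z)

lemma integrable_signedRpow_mul_mul (hp : 1 < p) (hf : Measurable f) (hh : Measurable h)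
    (hK : Measurable K) (hK0 : ∀ z, 0 ≤ K z) (hEf : Integrable (fun z => |f z| ^ p * K z) μ)
    (hEh : Integrable (fun z => |h z| ^ p * K z) μ) :
    Integrable (fun z => signedRpow p (f z) * h z * K z) μ := by
  refine (hEf.add hEh).mono' (by unfold signedRpow; fun_prop) (ae_of_all _ fun z => ?_)
  rw [norm_mul, norm_of_nonneg (hK0 z), Pi.add_apply, ← add_mul]
  exact mul_le_mul_of_nonneg_right (abs_signedRpow_mul_le hp _ _) (hK0 z)

lemma min_mul_pEnergy_sub_le (hp : 2 ≤ p) (hf : Measurable f) (hg : Measurable g)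
    (hK : Measurable K) (hK0 : ∀ z, 0 ≤ K z) (hEf : Integrable (fun z => |f z| ^ p * K z) μ)
    (hEg : Integrable (fun z => |g z| ^ p * K z) μ) :
    min 2⁻¹ ((2 : ℝ) ^ (2 - p)) * pEnergy μ p K (f - g) ≤
      pForm μ p K f (f - g) - pForm μ p K g (f - g) := by
  have hW := integrable_abs_sub_rpow_mul (by linarith) hf hg hK hK0 hEf hEg
  have hA := integrable_signedRpow_mul_mul (by linarith) hf (hf.sub hg) hK hK0 hEf hW
  have hB := integrable_signedRpow_mul_mul (by linarith) hg (hf.sub hg) hK hK0 hEg hW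
  rw [pEnergy, pForm, pForm, ← integral_const_mul, ← integral_sub hA hB]
  refine integral_mono (hW.const_mul _) (hA.sub hB) fun z => ?_
  have := mul_le_mul_of_nonneg_right (min_mul_abs_sub_rpow_le hp (f z) (g z)) (hK0 z)
  simp only [Pi.sub_apply] at this ⊢
  linarith

lemma pForm_sub_le (hp : 2 ≤ p) (hf : Measurable f) (hg : Measurable g)
    (hK : Measurable K) (hK0 : ∀ z, 0 ≤ K z) (hEf : Integrable (fun z => |f z| ^ p * K z) μ)
    (hEg : Integrable (fun z => |g z| ^ p * K z) μ) :
    pForm μ p K f (f - g) - pForm μ p K g (f - g) ≤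
      (p - 1) * (pEnergy μ p K (f - g) ^ (2 / p) *
        (∫ z, (|f z| + |g z|) ^ p * K z ∂μ) ^ ((p - 2) / p)) := by
  have hW := integrable_abs_sub_rpow_mul (by linarith) hf hg hK hK0 hEf hEg
  have hA := integrable_signedRpow_mul_mul (by linarith) hf (hf.sub hg) hK hK0 hEf hW
  have hB := integrable_signedRpow_mul_mul (by linarith) hg (hf.sub hg) hK hK0 hEg hW
  have hT := integrable_abs_add_abs_rpow_mul (by linarith) hf hg hK hK0 hEf hEg
  have hI : Integrable (fun z => (f - g) z ^ 2 * (|f z| + |g z|) ^ (p - 2) * K z) μ := by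
    refine hT.mono' (by fun_prop) (ae_of_all _ fun z => ?_)
    have hfg : (f z - g z) ^ 2 ≤ (|f z| + |g z|) ^ 2 := by
      rw [← sq_abs]; exact pow_le_pow_left₀ (abs_nonneg _) (abs_sub _ _) 2
    have hM : 0 ≤ (|f z| + |g z|) ^ (p - 2) := rpow_nonneg (by positivity) _
    rw [norm_of_nonneg (mul_nonneg (mul_nonneg (sq_nonneg _) hM) (hK0 z)),
      ← rpow_sub_two_mul_sq (by positivity) (by linarith : p ≠ 0), mul_comm (_ ^ (p - 2))]
    exact mul_le_mul_of_nonneg_right (mul_le_mul_of_nonneg_right hfg hM) (hK0 z)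
  rw [pForm, pForm, ← integral_sub hA hB, pEnergy]
  calc ∫ z, (signedRpow p (f z) * (f - g) z * K z - signedRpow p (g z) * (f - g) z * K z) ∂μ
      ≤ ∫ z, (p - 1) * ((f - g) z ^ 2 * (|f z| + |g z|) ^ (p - 2) * K z) ∂μ := by
        refine integral_mono (hA.sub hB) (hI.const_mul _) fun z => ?_
        have := mul_le_mul_of_nonneg_right (signedRpow_sub_mul_sub_le hp (f z) (g z)) (hK0 z)
        simp only [Pi.sub_apply] at this ⊢
        linarith
    _ = (p - 1) * ∫ z, (f - g) z ^ 2 * (|f z| + |g z|) ^ (p - 2) * K z ∂μ :=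
        integral_const_mul _ _
    _ ≤ _ := mul_le_mul_of_nonneg_left (integral_sq_mul_rpow_mul_le hp (hf.sub hg) (by fun_prop)
        hK (fun z => by positivity) hK0 hW hT) (by linarith)

theorem pForm_sub_rpow_le (hp : 2 ≤ p) (hf : Measurable f) (hg : Measurable g)
    (hK : Measurable K) (hK0 : ∀ z, 0 ≤ K z) (hEf : Integrable (fun z => |f z| ^ p * K z) μ)
    (hEg : Integrable (fun z => |g z| ^ p * K z) μ) :
    (pForm μ p K f (f - g) - pForm μ p K g (f - g)) ^ (p / 2) ≤
      2 ^ (p * (p - 2) / 2) * (p - 1) ^ (p / 2) * pEnergy μ p K (f - g) *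
        (pEnergy μ p K f + pEnergy μ p K g) ^ ((p - 2) / 2) := by
  set D := pForm μ p K f (f - g) - pForm μ p K g (f - g)
  set W := pEnergy μ p K (f - g)
  set T := ∫ z, (|f z| + |g z|) ^ p * K z ∂μ
  set E := pEnergy μ p K f + pEnergy μ p K g
  have hW0 : 0 ≤ W := pEnergy_nonneg hK0
  have hT0 : 0 ≤ T := integral_nonneg fun z => mul_nonneg (rpow_nonneg (by positivity) _) (hK0 z)
  have hE0 : 0 ≤ E := add_nonneg (pEnergy_nonneg hK0) (pEnergy_nonneg hK0)
  have hD0 : 0 ≤ D := le_trans (mul_nonneg (le_min (by norm_num) (by positivity)) hW0)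
    (min_mul_pEnergy_sub_le hp hf hg hK hK0 hEf hEg)
  calc D ^ (p / 2) ≤ ((p - 1) * (W ^ (2 / p) * T ^ ((p - 2) / p))) ^ (p / 2) :=
        rpow_le_rpow hD0 (pForm_sub_le hp hf hg hK hK0 hEf hEg) (by linarith)
    _ = (p - 1) ^ (p / 2) * (W * T ^ ((p - 2) / 2)) := by
        rw [mul_rpow (by linarith) (by positivity), mul_rpow (by positivity) (by positivity),
          ← rpow_mul hW0, ← rpow_mul hT0, div_mul_div_cancel₀ (by linarith : p ≠ 0),
          div_self two_ne_zero, rpow_one, show (p - 2) / p * (p / 2) = (p - 2) / 2 by field_simp]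
    _ ≤ (p - 1) ^ (p / 2) * (W * (2 ^ p * E) ^ ((p - 2) / 2)) := by
        gcongr
        · exact rpow_nonneg (by linarith) _
        · exact integral_abs_add_abs_rpow_mul_le (by linarith) hf hg hK hK0 hEf hEg
    _ = _ := by
        rw [mul_rpow (by positivity) hE0, ← rpow_mul zero_le_two, mul_div_assoc]
        ring

end Form

theorem stmt_7_general (d : ℕ) (p : ℝ) (hp : 2 ≤ p) (κ κ' c : ℝ)
    (hκ : κ = p - 1)
    (hκ' : κ' = min (2⁻¹ : ℝ) ((2 : ℝ) ^ (2 - p)))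
    (hc : c = (2 : ℝ) ^ (p * (p - 2) / 2) * κ ^ (p / 2))
    (k : EuclideanSpace ℝ (Fin d) → EuclideanSpace ℝ (Fin d) → ℝ)
    (hk : Measurable fun z : EuclideanSpace ℝ (Fin d) × EuclideanSpace ℝ (Fin d) => k z.1 z.2)
    (hk0 : ∀ x y, 0 ≤ k x y)
    (u v : EuclideanSpace ℝ (Fin d) → ℝ) (hu : Measurable u) (hv : Measurable v)
    (hEu : Integrable fun z : EuclideanSpace ℝ (Fin d) × EuclideanSpace ℝ (Fin d) =>
      |u z.1 - u z.2| ^ p * k z.1 z.2)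
    (hEv : Integrable fun z : EuclideanSpace ℝ (Fin d) × EuclideanSpace ℝ (Fin d) =>
      |v z.1 - v z.2| ^ p * k z.1 z.2) :
    (Integrable fun z : EuclideanSpace ℝ (Fin d) × EuclideanSpace ℝ (Fin d) =>
      |(u - v) z.1 - (u - v) z.2| ^ p * k z.1 z.2) ∧
    (Integrable fun z : EuclideanSpace ℝ (Fin d) × EuclideanSpace ℝ (Fin d) =>
      |u z.1 - u z.2| ^ (p - 2) * (u z.1 - u z.2) * ((u - v) z.1 - (u - v) z.2) * k z.1 z.2) ∧
    (Integrable fun z : EuclideanSpace ℝ (Fin d) × EuclideanSpace ℝ (Fin d) =>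
      |v z.1 - v z.2| ^ (p - 2) * (v z.1 - v z.2) * ((u - v) z.1 - (u - v) z.2) * k z.1 z.2) ∧
    0 ≤ nlForm d p k u (u - v) - nlForm d p k v (u - v) ∧
    κ' * nlDiag d p k (u - v) ≤ nlForm d p k u (u - v) - nlForm d p k v (u - v) ∧
    (nlForm d p k u (u - v) - nlForm d p k v (u - v)) ^ (p / 2) ≤
      c * nlDiag d p k (u - v) * (nlDiag d p k u + nlDiag d p k v) ^ ((p - 2) / 2) := by
  subst hκ hκ' hc
  have hU : Measurable fun z : EuclideanSpace ℝ (Fin d) × EuclideanSpace ℝ (Fin d) =>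
      u z.1 - u z.2 := by fun_prop
  have hV : Measurable fun z : EuclideanSpace ℝ (Fin d) × EuclideanSpace ℝ (Fin d) =>
      v z.1 - v z.2 := by fun_prop
  have hK0 : ∀ z : EuclideanSpace ℝ (Fin d) × EuclideanSpace ℝ (Fin d), 0 ≤ k z.1 z.2 :=
    fun z => hk0 z.1 z.2
  have hW := integrable_abs_sub_rpow_mul (by linarith) hU hV hk hK0 hEu hEv
  have hA := integrable_signedRpow_mul_mul (by linarith) hU (hU.sub hV) hk hK0 hEu hW
  have hB := integrable_signedRpow_mul_mul (by linarith) hV (hU.sub hV) hk hK0 hEv hW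
  have hlower := min_mul_pEnergy_sub_le hp hU hV hk hK0 hEu hEv
  have hupper := pForm_sub_rpow_le hp hU hV hk hK0 hEu hEv
  have hdiff : (fun z : EuclideanSpace ℝ (Fin d) × EuclideanSpace ℝ (Fin d) =>
      (u - v) z.1 - (u - v) z.2) = (fun z => u z.1 - u z.2) - fun z => v z.1 - v z.2 := by
    ext z; simp only [Pi.sub_apply]; ring
  rw [← hdiff] at hW hA hB hlower hupper
  exact ⟨hW, hA, hB, (mul_nonneg (by positivity) (pEnergy_nonneg hK0)).trans hlower, hlower, hupper⟩

/-- Case `p ≥ 2`: with `κ'_p = min(2⁻¹,2^{2-p})`, `κ_p = p-1` and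
`c_p = 2^{p(p-2)/2} κ_p^{p/2}`, if `𝓔_k(u,u), 𝓔_k(v,v) < ∞` then `𝓔_k(u-v,u-v) < ∞`,
`D := 𝓔_k(u,u-v) - 𝓔_k(v,u-v)` is well defined and nonnegative,
`D ≥ κ'_p 𝓔_k(u-v,u-v)` and
`D^{p/2} ≤ c_p 𝓔_k(u-v,u-v)(𝓔_k(u,u)+𝓔_k(v,v))^{(p-2)/2}`. -/
theorem stmt_7 (d : ℕ) (hd : 1 ≤ d) (p : ℝ) (hp : 2 ≤ p) (κ κ' c : ℝ)
    (hκ : κ = p - 1)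
    (hκ' : κ' = min (2⁻¹ : ℝ) ((2 : ℝ) ^ (2 - p)))
    (hc : c = (2 : ℝ) ^ (p * (p - 2) / 2) * κ ^ (p / 2))
    (k : EuclideanSpace ℝ (Fin d) → EuclideanSpace ℝ (Fin d) → ℝ)
    (hk : Measurable fun z : EuclideanSpace ℝ (Fin d) × EuclideanSpace ℝ (Fin d) => k z.1 z.2)
    (hk0 : ∀ x y, 0 ≤ k x y)
    (u v : EuclideanSpace ℝ (Fin d) → ℝ) (hu : Measurable u) (hv : Measurable v)
    (hEu : Integrable fun z : EuclideanSpace ℝ (Fin d) × EuclideanSpace ℝ (Fin d) =>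
      |u z.1 - u z.2| ^ p * k z.1 z.2)
    (hEv : Integrable fun z : EuclideanSpace ℝ (Fin d) × EuclideanSpace ℝ (Fin d) =>
      |v z.1 - v z.2| ^ p * k z.1 z.2) :
    (Integrable fun z : EuclideanSpace ℝ (Fin d) × EuclideanSpace ℝ (Fin d) =>
      |(u - v) z.1 - (u - v) z.2| ^ p * k z.1 z.2) ∧
    (Integrable fun z : EuclideanSpace ℝ (Fin d) × EuclideanSpace ℝ (Fin d) =>
      |u z.1 - u z.2| ^ (p - 2) * (u z.1 - u z.2) * ((u - v) z.1 - (u - v) z.2) * k z.1 z.2) ∧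
    (Integrable fun z : EuclideanSpace ℝ (Fin d) × EuclideanSpace ℝ (Fin d) =>
      |v z.1 - v z.2| ^ (p - 2) * (v z.1 - v z.2) * ((u - v) z.1 - (u - v) z.2) * k z.1 z.2) ∧
    0 ≤ nlForm d p k u (u - v) - nlForm d p k v (u - v) ∧
    κ' * nlDiag d p k (u - v) ≤ nlForm d p k u (u - v) - nlForm d p k v (u - v) ∧
    (nlForm d p k u (u - v) - nlForm d p k v (u - v)) ^ (p / 2) ≤
      c * nlDiag d p k (u - v) * (nlDiag d p k u + nlDiag d p k v) ^ ((p - 2) / 2) :=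
  stmt_7_general d p hp κ κ' c hκ hκ' hc k hk hk0 u v hu hv hEu hEv
end

section
/- Let $d \ge 1$ and let $\Omega \subseteq \mathbb{R}^d$ be an open set. Suppose there exists a constant $c > 0$ such that $\lambda\big(\Omega \cap B(x,r)\big) \ge c\, r^d$ for every $x \in \partial\Omega$ and every $r \in (0,1)$, where $\lambda$ denotes $d$-dimensional Lebesgue measure and $B(x,r)$ the open Euclidean ball of center $x$ and radius $r$. Then the boundary of $\Omega$ has Lebesgue measure zero: $\lambda(\partial\Omega) = 0$. -/
open MeasureTheory Metric Filter

/-- If an open set `Ω ⊆ ℝ^d` satisfies the volume density condition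
`|Ω ∩ B(x,r)| ≥ c r^d` for all `x ∈ ∂Ω` and `r ∈ (0,1)` (i.e. `Ω` is a `d`-set),
then its boundary is Lebesgue-null: `|∂Ω| = 0`. -/
theorem stmt_11 (d : ℕ) (hd : 1 ≤ d) (Ω : Set (EuclideanSpace ℝ (Fin d)))
    (hΩ : IsOpen Ω) (c : ℝ) (hc : 0 < c)
    (hdset : ∀ x ∈ frontier Ω, ∀ r : ℝ, 0 < r → r < 1 →
      ENNReal.ofReal (c * r ^ d) ≤ volume (Ω ∩ Metric.ball x r)) :
    volume (frontier Ω) = 0 := by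
  set μ : Measure (EuclideanSpace ℝ (Fin d)) := volume
  set F := frontier Ω with hF
  have hFm : MeasurableSet F := isClosed_frontier.measurableSet
  set K : ENNReal := μ (closedBall 0 1) with hK
  have hK0 : 0 < K := measure_closedBall_pos μ _ one_pos
  have hKtop : K ≠ ⊤ := (measure_closedBall_lt_top).ne
  -- the fixed gap
  have hgap : (0:ENNReal) < ENNReal.ofReal c / K :=
    ENNReal.div_pos (by simpa using hc) hKtop
  set a : ENNReal := 1 - ENNReal.ofReal c / K with ha
  have ha1 : a < 1 := ENNReal.sub_lt_self ENNReal.one_ne_top one_ne_zero hgap.ne'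
  -- key pointwise bound
  have key : ∀ x ∈ F, ∀ r : ℝ, 0 < r → r < 1 →
      μ (F ∩ closedBall x r) / μ (closedBall x r) ≤ a := by
    intro x hx r hr hr1
    have hball : μ (closedBall x r) = ENNReal.ofReal (r ^ d) * K := by
      rw [hK, Measure.addHaar_closedBall' μ x hr.le, finrank_euclideanSpace_fin]
    have hdisj : Disjoint (F ∩ closedBall x r) (Ω ∩ ball x r) := by
      refine Set.disjoint_left.2 fun y hy hy' => ?_
      have : y ∈ closure Ω \ Ω := hΩ.frontier_eq ▸ (hy.1 : y ∈ frontier Ω)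
      exact this.2 hy'.1
    set A := μ (closedBall x r) with hA
    set R := ENNReal.ofReal (r ^ d) with hR
    have hR0 : R ≠ 0 := by
      simp [hR, ENNReal.ofReal_pos, pow_pos hr]
    have hRtop : R ≠ ⊤ := ENNReal.ofReal_ne_top
    have hA0 : A ≠ 0 := by
      rw [hball]; exact mul_ne_zero hR0 hK0.ne'
    have hAtop : A ≠ ⊤ := by rw [hball]; exact ENNReal.mul_ne_top hRtop hKtop
    have hsum : μ (F ∩ closedBall x r) + μ (Ω ∩ ball x r) ≤ A := by
      rw [← measure_union hdisj (hΩ.measurableSet.inter measurableSet_ball)]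
      refine measure_mono (Set.union_subset (Set.inter_subset_right) ?_)
      exact (Set.inter_subset_right).trans ball_subset_closedBall
    have hlow : ENNReal.ofReal c / K ≤ μ (Ω ∩ ball x r) / A := by
      have h1 : ENNReal.ofReal c * R ≤ μ (Ω ∩ ball x r) := by
        rw [hR, ← ENNReal.ofReal_mul hc.le]
        exact hdset x hx r hr hr1
      calc ENNReal.ofReal c / K = ENNReal.ofReal c * R / (K * R) :=
            (ENNReal.mul_div_mul_right _ _ hR0 hRtop).symm
        _ ≤ μ (Ω ∩ ball x r) / A := by
            rw [hball, mul_comm R K]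
            exact ENNReal.div_le_div_right h1 _
    have htotal : μ (F ∩ closedBall x r) / A + ENNReal.ofReal c / K ≤ 1 := by
      calc μ (F ∩ closedBall x r) / A + ENNReal.ofReal c / K
          ≤ μ (F ∩ closedBall x r) / A + μ (Ω ∩ ball x r) / A := by gcongr
        _ = (μ (F ∩ closedBall x r) + μ (Ω ∩ ball x r)) / A := ENNReal.div_add_div_same
        _ ≤ A / A := ENNReal.div_le_div_right hsum _
        _ ≤ 1 := ENNReal.div_self_le_one
    rw [ha]
    exact ENNReal.le_sub_of_add_le_right (by simp [ENNReal.div_eq_top, hK0.ne', ENNReal.ofReal_ne_top]) htotal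
  -- conclude via the Lebesgue density theorem
  have density := Besicovitch.ae_tendsto_measure_inter_div_of_measurableSet μ hFm
  refine measure_mono_null (fun x hx => ?_) (ae_iff.1 density)
  simp only [Set.mem_setOf_eq]
  rw [Set.indicator_of_mem hx]
  intro htend
  have h1 : ∀ᶠ r in nhdsWithin (0:ℝ) (Set.Ioi 0),
      a < μ (F ∩ closedBall x r) / μ (closedBall x r) :=
    htend (Ioi_mem_nhds ha1)
  have h2 : ∀ᶠ r in nhdsWithin (0:ℝ) (Set.Ioi 0),
      μ (F ∩ closedBall x r) / μ (closedBall x r) ≤ a := by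
    filter_upwards [Ioo_mem_nhdsGT_of_mem (Set.mem_Ico.2 ⟨le_refl 0, one_pos⟩)] with r hr
    exact key x hx r hr.1 hr.2
  obtain ⟨r, hr1, hr2⟩ := (h1.and h2).exists
  exact absurd (hr1.trans_le hr2) (lt_irrefl a)
end

section
/- Let $p \in [1,\infty)$. There exists a constant $C > 0$, depending only on $p$, such that for all $a, b \in \mathbb{R}$: $\Big| |a+b|^p - \sum_{k=0}^{\lfloor p \rfloor} \binom{p}{k}\, |a|^{p-k}\,(\operatorname{sgn} a)^k\, b^k \Big| \le C\,|b|^p$, where $\lfloor p \rfloor = \max\{m \in \mathbb{N} : m \le p\}$ and $\binom{p}{k} = \frac{\Gamma(p+1)}{k!\,\Gamma(p-k+1)}$. -/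
/-!
Where `|a| ≤ 2|b|`, every term of the expression is trivially `O(|b|^p)`. Where `2|b| < |a|`, put
`x = |a|` and `t = sgn(a) b`: the expression becomes the remainder
`(x + t)^p - ∑_{k ≤ ⌊p⌋} (p choose k) x^(p-k) t^k` of the binomial series. Its `t`-derivative is
`p` times the remainder of one order less for the exponent `p - 1`, so the mean value theorem and
induction on `⌊p⌋` bound it by `(⌊p⌋ + 1)! |t|^p`; in the base case `0 ≤ p < 1` the derivative
`p (x + s)^(p-1)` is at most `|t|^(p-1)` because `x + s ≥ |t|`.
-/

open Finset Polynomial Set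

theorem Ring.choose_eq_eval_descPochhammer_div {K : Type*} [Field K] [CharZero K] (r : K) (k : ℕ) :
    Ring.choose r k = (descPochhammer K k).eval r / k.factorial := by
  rw [Ring.choose_eq_smul, ← descPochhammer_map (Int.castRingHom K), eval_map,
    ← RingHom.ext_int RingHom.smulOneHom (Int.castRingHom K), eval₂_smulOneHom_eq_smeval,
    smul_eq_mul, div_eq_inv_mul]

theorem Ring.succ_mul_choose_succ {K : Type*} [Field K] [CharZero K] (r : K) (k : ℕ) :
    (k + 1) * Ring.choose r (k + 1) = r * Ring.choose (r - 1) k := by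
  have hk : (k.factorial : K) ≠ 0 := Nat.cast_ne_zero.mpr k.factorial_ne_zero
  have hk1 : (k : K) + 1 ≠ 0 := Nat.cast_add_one_ne_zero k
  simp only [Ring.choose_eq_eval_descPochhammer_div, descPochhammer_succ_left, eval_mul, eval_X,
    eval_comp, eval_sub, eval_one, Nat.factorial_succ, Nat.cast_mul, Nat.cast_succ]
  field_simp

theorem Real.Gamma_add_one_eq_eval_descPochhammer_mul {p : ℝ} {k : ℕ} (hk : (k : ℝ) ≤ p) :
    Gamma (p + 1) = (descPochhammer ℝ k).eval p * Gamma (p - k + 1) := by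
  induction k with
  | zero => simp
  | succ k ih =>
    push_cast at hk ⊢
    rw [ih (by linarith), descPochhammer_succ_eval, mul_assoc, sub_add_eq_sub_sub, sub_add_cancel,
      ← Real.Gamma_add_one (by linarith : p - k ≠ 0)]

theorem Real.Gamma_div_factorial_mul_Gamma_eq_choose {p : ℝ} {k : ℕ} (hk : (k : ℝ) ≤ p) :
    Gamma (p + 1) / (k.factorial * Gamma (p - k + 1)) = Ring.choose p k := by
  have hΓ : Gamma (p - k + 1) ≠ 0 := (Real.Gamma_pos_of_pos (by linarith)).ne'
  rw [Gamma_add_one_eq_eval_descPochhammer_mul hk, Ring.choose_eq_eval_descPochhammer_div,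
    mul_div_mul_right _ _ hΓ]

noncomputable def binomialRemainder (q : ℝ) (n : ℕ) (x t : ℝ) : ℝ :=
  (x + t) ^ q - ∑ k ∈ range n, Ring.choose q k * x ^ (q - k) * t ^ k

theorem binomialRemainder_succ_zero_right (q : ℝ) (n : ℕ) (x : ℝ) :
    binomialRemainder q (n + 1) x 0 = 0 := by
  simp [binomialRemainder, sum_range_succ']

theorem hasDerivAt_binomialRemainder_succ (q : ℝ) (n : ℕ) {x t : ℝ} (hxt : 0 < x + t) :
    HasDerivAt (binomialRemainder q (n + 1) x) (q * binomialRemainder (q - 1) n x t) t := by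
  have hpow : HasDerivAt (fun s => (x + s) ^ q) (q * (x + t) ^ (q - 1)) t := by
    simpa using ((hasDerivAt_id t).const_add x).rpow_const (p := q) (Or.inl hxt.ne')
  have hsum := HasDerivAt.fun_sum (u := range (n + 1)) fun k _ =>
    (hasDerivAt_pow k t).const_mul (Ring.choose q k * x ^ (q - k))
  refine (hpow.sub hsum).congr_deriv ?_
  rw [binomialRemainder, mul_sub, sum_range_succ', mul_sum]
  congr 1
  simp only [Nat.cast_zero, zero_mul, mul_zero, add_zero, Nat.cast_add, Nat.cast_one,
    add_tsub_cancel_right]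
  refine sum_congr rfl fun k _ => ?_
  rw [show q - (k + 1 : ℝ) = q - 1 - k by ring]
  linear_combination (x ^ (q - 1 - k) * t ^ k) * Ring.succ_mul_choose_succ q k

theorem abs_le_mul_abs_of_hasDerivAt {f f' : ℝ → ℝ} {t M : ℝ} (hf0 : f 0 = 0)
    (hf : ∀ s ∈ uIcc 0 t, HasDerivAt f (f' s) s) (hM : ∀ s ∈ uIcc 0 t, |f' s| ≤ M) :
    |f t| ≤ M * |t| := by
  simpa [hf0] using (convex_uIcc 0 t).norm_image_sub_le_of_norm_hasDerivWithin_le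
    (fun s hs => (hf s hs).hasDerivWithinAt) hM left_mem_uIcc right_mem_uIcc

theorem abs_binomialRemainder_succ_le {q : ℝ} {n : ℕ} {x t M : ℝ} (ht : t ≠ 0) (hx : 2 * |t| ≤ x)
    (hM : ∀ s, |s| ≤ |t| → |q * binomialRemainder (q - 1) n x s| ≤ M * |t| ^ (q - 1)) :
    |binomialRemainder q (n + 1) x t| ≤ M * |t| ^ q := by
  have habs : ∀ s ∈ uIcc 0 t, |s| ≤ |t| := fun s hs => by
    simpa using abs_sub_left_of_mem_uIcc hs
  calc |binomialRemainder q (n + 1) x t| ≤ M * |t| ^ (q - 1) * |t| := by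
        refine abs_le_mul_abs_of_hasDerivAt (binomialRemainder_succ_zero_right q n x)
          (fun s hs => hasDerivAt_binomialRemainder_succ q n ?_) (fun s hs => hM s (habs s hs))
        linarith [neg_abs_le s, habs s hs, abs_pos.mpr ht]
    _ = M * |t| ^ q := by rw [mul_assoc, ← Real.rpow_add_one (abs_ne_zero.mpr ht), sub_add_cancel]

theorem abs_binomialRemainder_le (n : ℕ) {q x t : ℝ} (hnq : n ≤ q) (hqn : q < n + 1)
    (hx : 2 * |t| ≤ x) : |binomialRemainder q (n + 1) x t| ≤ (n + 1).factorial * |t| ^ q := by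
  rcases eq_or_ne t 0 with rfl | ht
  · rw [binomialRemainder_succ_zero_right, abs_zero]
    positivity
  induction n generalizing q t with
  | zero =>
    refine abs_binomialRemainder_succ_le ht hx fun s hs => ?_
    have hxs : |t| ≤ x + s := by linarith [neg_abs_le s]
    have hpos : 0 < x + s := (abs_pos.mpr ht).trans_le hxs
    simp only [Nat.cast_zero, zero_add] at hnq hqn
    simp only [binomialRemainder, range_zero, sum_empty, sub_zero, abs_mul, abs_of_nonneg hnq,
      abs_of_pos (Real.rpow_pos_of_pos hpos _), zero_add, Nat.factorial_one, Nat.cast_one, one_mul]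
    calc q * (x + s) ^ (q - 1) ≤ 1 * |t| ^ (q - 1) :=
          mul_le_mul hqn.le (Real.rpow_le_rpow_of_nonpos (abs_pos.mpr ht) hxs (by linarith))
            (by positivity) zero_le_one
      _ = |t| ^ (q - 1) := one_mul _
  | succ m ih =>
    refine abs_binomialRemainder_succ_le ht hx fun s hs => ?_
    push_cast at hnq hqn
    have hq : |q| ≤ m + 2 := abs_le.mpr ⟨by linarith [(m.cast_nonneg : (0 : ℝ) ≤ m)], by linarith⟩
    have hrem : |binomialRemainder (q - 1) (m + 1) x s| ≤ (m + 1).factorial * |t| ^ (q - 1) := by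
      rcases eq_or_ne s 0 with rfl | hs0
      · rw [binomialRemainder_succ_zero_right, abs_zero]
        positivity
      refine (ih (by linarith) (by linarith) (by linarith) hs0).trans ?_
      gcongr
      linarith
    calc |q * binomialRemainder (q - 1) (m + 1) x s|
        ≤ (m + 2) * ((m + 1).factorial * |t| ^ (q - 1)) := by
          rw [abs_mul]; exact mul_le_mul hq hrem (abs_nonneg _) (by positivity)
      _ = (m + 1 + 1).factorial * |t| ^ (q - 1) := by
          push_cast [Nat.factorial_succ]; ring

theorem Real.abs_sign_le_one (a : ℝ) : |Real.sign a| ≤ 1 := by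
  rcases Real.sign_apply_eq a with h | h | h <;> simp [h]

theorem abs_add_rpow_sub_sum_eq_binomialRemainder (p : ℝ) (n : ℕ) {a b : ℝ} (hba : |b| ≤ |a|) :
    |a + b| ^ p - ∑ k ∈ range n, Ring.choose p k * (|a| ^ (p - k) * Real.sign a ^ k * b ^ k) =
      binomialRemainder p n |a| (Real.sign a * b) := by
  have habs : |a + b| = |a| + Real.sign a * b := by
    rcases lt_trichotomy a 0 with ha | rfl | ha
    · rw [abs_of_neg ha, Real.sign_of_neg ha,
        abs_of_nonpos (by linarith [le_abs_self b, abs_of_neg ha])]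
      ring
    · simp_all
    · rw [abs_of_pos ha, Real.sign_of_pos ha,
        abs_of_nonneg (by linarith [neg_abs_le b, abs_of_pos ha])]
      ring
  rw [binomialRemainder, habs]
  congr 1
  exact sum_congr rfl fun k _ => by ring

theorem abs_abs_add_rpow_sub_sum_le_of_abs_le_two_mul {p : ℝ} {n : ℕ} (hp : 0 < p) (hnp : n ≤ p)
    {a b : ℝ} (hab : |a| ≤ 2 * |b|) :
    |(|a + b| ^ p -
        ∑ k ∈ range (n + 1), Ring.choose p k * (|a| ^ (p - k) * Real.sign a ^ k * b ^ k))|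
      ≤ (3 ^ p + 2 ^ p * ∑ k ∈ range (n + 1), |Ring.choose p k|) * |b| ^ p := by
  have hmain : |a + b| ^ p ≤ 3 ^ p * |b| ^ p := by
    rw [← Real.mul_rpow (by norm_num) (abs_nonneg b)]
    gcongr
    linarith [abs_add_le a b]
  have hterm : ∀ k ∈ range (n + 1),
      |Ring.choose p k * (|a| ^ (p - k) * Real.sign a ^ k * b ^ k)|
        ≤ 2 ^ p * |b| ^ p * |Ring.choose p k| := fun k hk => by
    have hkp : (k : ℝ) ≤ p :=
      (Nat.cast_le.mpr (Nat.lt_succ_iff.mp (mem_range.mp hk))).trans hnp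
    have hsign : |Real.sign a| ^ k ≤ 1 := pow_le_one₀ (abs_nonneg _) (Real.abs_sign_le_one a)
    calc |Ring.choose p k * (|a| ^ (p - k) * Real.sign a ^ k * b ^ k)|
        = |Ring.choose p k| * (|a| ^ (p - k) * |Real.sign a| ^ k * |b| ^ k) := by
          simp only [abs_mul, abs_pow, abs_of_nonneg (Real.rpow_nonneg (abs_nonneg a) _)]
      _ ≤ |Ring.choose p k| * ((2 * |b|) ^ (p - k) * 1 * |b| ^ k) := by gcongr
      _ = |Ring.choose p k| * (2 ^ (p - k) * |b| ^ p) := by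
          rw [Real.mul_rpow (by norm_num) (abs_nonneg b), mul_one, mul_assoc, ← Real.rpow_natCast,
            ← Real.rpow_add' (abs_nonneg b) (by linarith), sub_add_cancel]
      _ ≤ 2 ^ p * |b| ^ p * |Ring.choose p k| := by
          rw [mul_comm]
          gcongr
          · norm_num
          · linarith
  calc _ ≤ |a + b| ^ p + |∑ k ∈ range (n + 1),
          Ring.choose p k * (|a| ^ (p - k) * Real.sign a ^ k * b ^ k)| := by
        refine (abs_sub _ _).trans_eq ?_
        rw [abs_of_nonneg (by positivity)]
    _ ≤ 3 ^ p * |b| ^ p + ∑ k ∈ range (n + 1), 2 ^ p * |b| ^ p * |Ring.choose p k| :=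
        add_le_add hmain ((abs_sum_le_sum_abs _ _).trans (sum_le_sum hterm))
    _ = _ := by rw [← mul_sum]; ring

theorem exists_abs_abs_add_rpow_sub_sum_choose_le {p : ℝ} (hp : 0 < p) :
    ∃ C : ℝ, 0 < C ∧ ∀ a b : ℝ,
      |(|a + b| ^ p - ∑ k ∈ range (⌊p⌋₊ + 1),
          Ring.choose p k * (|a| ^ (p - k) * Real.sign a ^ k * b ^ k))| ≤ C * |b| ^ p := by
  set n := ⌊p⌋₊
  have hnp : (n : ℝ) ≤ p := Nat.floor_le hp.le
  have hpn : p < n + 1 := Nat.lt_floor_add_one p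
  refine ⟨(n + 1).factorial + (3 ^ p + 2 ^ p * ∑ k ∈ range (n + 1), |Ring.choose p k|),
    by positivity, fun a b => ?_⟩
  rcases le_or_gt |a| (2 * |b|) with hab | hab
  · refine (abs_abs_add_rpow_sub_sum_le_of_abs_le_two_mul hp hnp hab).trans ?_
    exact mul_le_mul_of_nonneg_right (le_add_of_nonneg_left (by positivity)) (by positivity)
  have hsb : |Real.sign a * b| ≤ |b| := by
    rw [abs_mul]
    exact mul_le_of_le_one_left (abs_nonneg b) (Real.abs_sign_le_one a)
  rw [abs_add_rpow_sub_sum_eq_binomialRemainder p _ (by linarith [abs_nonneg b])]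
  calc _ ≤ (n + 1).factorial * |Real.sign a * b| ^ p :=
        abs_binomialRemainder_le n hnp hpn (by linarith)
    _ ≤ (n + 1).factorial * |b| ^ p := by gcongr
    _ ≤ _ := mul_le_mul_of_nonneg_right (le_add_of_nonneg_right (by positivity)) (by positivity)

/-- Taylor-type expansion with binomial coefficients: for `p ∈ [1,∞)`
there is `C = C(p) > 0` with
`| |a+b|^p - ∑_{k=0}^{⌊p⌋} bin(p,k) |a|^{p-k} (sgn a)^k b^k | ≤ C |b|^p`
for all `a, b ∈ ℝ`, where `bin(p,k) = Γ(p+1)/(k! Γ(p-k+1))`. -/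
theorem stmt_13 (p : ℝ) (hp : 1 ≤ p) :
    ∃ C : ℝ, 0 < C ∧ ∀ a b : ℝ,
      |(|a + b| ^ p - ∑ k ∈ Finset.range (⌊p⌋₊ + 1),
          Real.Gamma (p + 1) / ((k.factorial : ℝ) * Real.Gamma (p - (k : ℝ) + 1)) *
            (|a| ^ (p - (k : ℝ)) * Real.sign a ^ k * b ^ k))| ≤ C * |b| ^ p := by
  obtain ⟨C, hC, hbound⟩ := exists_abs_abs_add_rpow_sub_sum_choose_le (by linarith : 0 < p)
  refine ⟨C, hC, fun a b => ?_⟩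
  convert hbound a b using 4 with k hk
  have hkp : (k : ℝ) ≤ p :=
    (Nat.cast_le.mpr (Nat.lt_succ_iff.mp (mem_range.mp hk))).trans (Nat.floor_le (by linarith))
  rw [Real.Gamma_div_factorial_mul_Gamma_eq_choose hkp]
end

section
/- Let $p \in [1,\infty)$. There exists a constant $C > 0$, depending only on $p$, such that for all $R > 0$, all $a, b \in \mathbb{R}$ with $|a| \le R$ and $|b| \le R$, and all $t \in \mathbb{R}$ with $|t| \le 1$: $\big| |a+tb|^p - |a|^p - p\,t\,|a|^{p-2}a\,b \big| \le C\, |t|^{\min(p,2)}\, R^p$. -/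
/-!
For `p > 1` the map `u ↦ |a + u b|^p` is `C¹` with derivative `p φ(a + u b) b`, where
`φ(x) = |x|^(p-2) x`, so by the mean value theorem the first-order remainder is at most
`p |b| |t|` times the oscillation of `φ` on the segment from `a` to `a + t b`. For `p ≤ 2` that
oscillation is controlled by the `(p-1)`-Hölder continuity of `φ`, for `p ≥ 2` by its Lipschitz
constant `(p-1) (2R)^(p-2)` on `[-2R, 2R]`; since `φ` is odd, both estimates reduce to elementary
inequalities for `x ↦ x^(p-1)` on `[0, ∞)`. For `p = 1`, `φ` is the sign function and the triangle
inequality suffices.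
-/

open Real Set

-- `Real.rpow` gives `0 ^ y = 0` for `y ≠ 0`, so `signedPow p 0 = 0` for every `p`.
noncomputable def signedPow (p x : ℝ) : ℝ := |x| ^ (p - 2) * x

lemma signedPow_neg (p x : ℝ) : signedPow p (-x) = -signedPow p x := by
  simp [signedPow]

lemma signedPow_of_nonneg {p x : ℝ} (hp : p ≠ 1) (hx : 0 ≤ x) : signedPow p x = x ^ (p - 1) := by
  rcases hx.eq_or_lt with rfl | hx
  · simp [signedPow, zero_rpow (sub_ne_zero.2 hp)]
  · rw [signedPow, abs_of_pos hx, ← rpow_add_one hx.ne']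
    ring_nf

lemma abs_signedPow_one_le (x : ℝ) : |signedPow 1 x| ≤ 1 := by
  rcases eq_or_ne x 0 with rfl | hx
  · simp [signedPow]
  · rw [signedPow, abs_mul, abs_of_nonneg (rpow_nonneg (abs_nonneg x) _),
      ← rpow_add_one (abs_ne_zero.2 hx)]
    norm_num

lemma forall₂_of_sign_cases {P : ℝ → ℝ → Prop} (swap : ∀ x y, P x y → P y x)
    (neg : ∀ x y, P x y → P (-x) (-y)) (same : ∀ x y, 0 ≤ y → y ≤ x → P x y)
    (opposite : ∀ x y, y ≤ 0 → 0 ≤ x → P x y) (x y : ℝ) : P x y := by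
  wlog hyx : y ≤ x generalizing x y
  · exact swap _ _ (this y x (le_of_not_ge hyx))
  rcases le_total 0 y with hy | hy
  · exact same x y hy hyx
  rcases le_total 0 x with hx | hx
  · exact opposite x y hy hx
  simpa using neg _ _ (swap _ _ (same (-y) (-x) (neg_nonneg.2 hx) (neg_le_neg hyx)))

lemma abs_signedPow_sub_le {p : ℝ} (hp : 1 < p) {B : ℝ → ℝ → ℝ}
    (hB_swap : ∀ x y, B y x = B x y) (hB_neg : ∀ x y, B (-x) (-y) = B x y)
    (same : ∀ x y, 0 ≤ y → y ≤ x → x ^ (p - 1) - y ^ (p - 1) ≤ B x y)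
    (opposite : ∀ x y, y ≤ 0 → 0 ≤ x → x ^ (p - 1) + (-y) ^ (p - 1) ≤ B x y) (x y : ℝ) :
    |signedPow p x - signedPow p y| ≤ B x y := by
  refine forall₂_of_sign_cases (P := fun x y ↦ |signedPow p x - signedPow p y| ≤ B x y)
    (fun x y h ↦ by rwa [abs_sub_comm, hB_swap]) (fun x y h ↦ by
      rwa [signedPow_neg, signedPow_neg, ← neg_sub', abs_neg, hB_neg]) (fun x y hy hyx ↦ ?_)
    (fun x y hy hx ↦ ?_) x y
  · have hx := hy.trans hyx
    rw [signedPow_of_nonneg hp.ne' hx, signedPow_of_nonneg hp.ne' hy,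
      abs_of_nonneg (sub_nonneg.2 (rpow_le_rpow hy hyx (by linarith)))]
    exact same x y hy hyx
  · rw [signedPow_of_nonneg hp.ne' hx, ← neg_neg y, signedPow_neg,
      signedPow_of_nonneg hp.ne' (neg_nonneg.2 hy), sub_neg_eq_add, neg_neg,
      abs_of_nonneg (add_nonneg (rpow_nonneg hx _) (rpow_nonneg (neg_nonneg.2 hy) _))]
    exact opposite x y hy hx

lemma abs_signedPow_sub_le_two_mul_rpow {p : ℝ} (hp1 : 1 < p) (hp2 : p ≤ 2) (x y : ℝ) :
    |signedPow p x - signedPow p y| ≤ 2 * |x - y| ^ (p - 1) := by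
  refine abs_signedPow_sub_le (B := fun x y ↦ 2 * |x - y| ^ (p - 1)) hp1
    (fun x y ↦ by rw [abs_sub_comm])
    (fun x y ↦ by rw [neg_sub_neg, abs_sub_comm]) (fun x y hy hyx ↦ ?_) (fun x y hy hx ↦ ?_) x y
  · have hsub : x ^ (p - 1) ≤ (x - y) ^ (p - 1) + y ^ (p - 1) := by
      simpa using rpow_add_le_add_rpow (sub_nonneg.2 hyx) hy (by linarith) (by linarith)
    rw [abs_of_nonneg (sub_nonneg.2 hyx)]
    linarith [rpow_nonneg (sub_nonneg.2 hyx) (p - 1)]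
  · have hx' : x ^ (p - 1) ≤ (x - y) ^ (p - 1) := rpow_le_rpow hx (by linarith) (by linarith)
    have hy' : (-y) ^ (p - 1) ≤ (x - y) ^ (p - 1) :=
      rpow_le_rpow (by linarith) (by linarith) (by linarith)
    rw [abs_of_nonneg (by linarith)]
    linarith

lemma rpow_sub_rpow_le_mul {q x y : ℝ} (hq : 1 ≤ q) (hy : 0 ≤ y) (hyx : y ≤ x) :
    x ^ q - y ^ q ≤ q * x ^ (q - 1) * (x - y) := by
  have hderiv : ∀ z ∈ Icc y x, HasDerivWithinAt (· ^ q) (q * z ^ (q - 1)) (Icc y x) z :=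
    fun z _ ↦ (hasDerivAt_rpow_const (Or.inr hq)).hasDerivWithinAt
  have hbound : ∀ z ∈ Icc y x, ‖q * z ^ (q - 1)‖ ≤ q * x ^ (q - 1) := fun z hz ↦ by
    have hz₀ := hy.trans hz.1
    rw [norm_of_nonneg (by positivity)]
    gcongr
    exact hz.2
  have := (convex_Icc y x).norm_image_sub_le_of_norm_hasDerivWithin_le hderiv hbound
    (left_mem_Icc.2 hyx) (right_mem_Icc.2 hyx)
  rw [norm_of_nonneg (sub_nonneg.2 hyx)] at this
  exact (le_abs_self _).trans this

lemma abs_signedPow_sub_le_mul_max_rpow {p : ℝ} (hp : 2 ≤ p) (x y : ℝ) :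
    |signedPow p x - signedPow p y| ≤ (p - 1) * max |x| |y| ^ (p - 2) * |x - y| := by
  refine abs_signedPow_sub_le (B := fun x y ↦ (p - 1) * max |x| |y| ^ (p - 2) * |x - y|)
    (by linarith) (fun x y ↦ by rw [max_comm, abs_sub_comm])
    (fun x y ↦ by rw [abs_neg, abs_neg, neg_sub_neg, abs_sub_comm]) (fun x y hy hyx ↦ ?_)
    (fun x y hy hx ↦ ?_) x y
  · calc x ^ (p - 1) - y ^ (p - 1) ≤ (p - 1) * x ^ (p - 1 - 1) * (x - y) :=
          rpow_sub_rpow_le_mul (by linarith) hy hyx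
      _ ≤ (p - 1) * max |x| |y| ^ (p - 2) * |x - y| := by
        rw [sub_sub, one_add_one_eq_two, abs_of_nonneg (sub_nonneg.2 hyx)]
        have hx : 0 ≤ x := hy.trans hyx
        gcongr
        · linarith
        · exact (le_abs_self x).trans (le_max_left _ _)
  · set M := max |x| |y|
    have hpow : ∀ z, 0 ≤ z → z ≤ M → z ^ (p - 1) ≤ M ^ (p - 2) * z := fun z hz hzM ↦
      calc z ^ (p - 1) = z ^ (p - 2) * z := by
            rw [← rpow_add_one' hz (by linarith)]
            ring_nf
        _ ≤ M ^ (p - 2) * z := by gcongr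
    have hx' := hpow x hx ((le_abs_self x).trans (le_max_left _ _))
    have hy' := hpow (-y) (by linarith) ((neg_le_abs y).trans (le_max_right _ _))
    have hM : 0 ≤ M ^ (p - 2) * (x - y) :=
      mul_nonneg (rpow_nonneg ((abs_nonneg x).trans (le_max_left _ _)) _) (by linarith)
    rw [abs_of_nonneg (by linarith)]
    nlinarith

lemma abs_sub_sub_mul_le_of_hasDerivAt {f f' : ℝ → ℝ} {t D : ℝ}
    (hf : ∀ s ∈ uIcc 0 t, HasDerivAt f (f' s) s) (hD : ∀ s ∈ uIcc 0 t, |f' s - f' 0| ≤ D) :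
    |f t - f 0 - t * f' 0| ≤ D * |t| := by
  have hg : ∀ s ∈ uIcc 0 t,
      HasDerivWithinAt (fun u ↦ f u - u * f' 0) (f' s - f' 0) (uIcc 0 t) s := fun s hs ↦ by
    simpa using ((hf s hs).fun_sub ((hasDerivAt_id s).mul_const (f' 0))).hasDerivWithinAt
  have := (convex_uIcc 0 t).norm_image_sub_le_of_norm_hasDerivWithin_le hg hD left_mem_uIcc
    right_mem_uIcc
  simp only [Real.norm_eq_abs, zero_mul, sub_zero] at this
  rwa [sub_right_comm]

lemma abs_rpow_remainder_le {p : ℝ} (hp : 1 < p) {a b t D : ℝ}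
    (hD : ∀ s, |s| ≤ |t| → |signedPow p (a + s * b) - signedPow p a| ≤ D) :
    |(|a + t * b| ^ p - |a| ^ p - p * t * signedPow p a * b)| ≤ p * |b| * D * |t| := by
  have hf : ∀ s ∈ uIcc 0 t,
      HasDerivAt (fun u ↦ |a + u * b| ^ p) (p * signedPow p (a + s * b) * b) s := fun s _ ↦ by
    have := (hasDerivAt_abs_rpow (a + s * b) hp).comp s
      (((hasDerivAt_id s).mul_const b).const_add a)
    simpa [signedPow, Function.comp_def, mul_assoc] using this
  have key := abs_sub_sub_mul_le_of_hasDerivAt (D := p * |b| * D) hf fun s hs ↦ by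
    have hs' : |s| ≤ |t| := by simpa using abs_sub_left_of_mem_uIcc hs
    simp only [zero_mul, add_zero]
    rw [← mul_sub_right_distrib, ← mul_sub, abs_mul, abs_mul, abs_of_pos (by linarith : 0 < p),
      mul_right_comm]
    gcongr
    exact hD s hs'
  simpa [mul_assoc, mul_left_comm] using key

lemma abs_abs_remainder_le {a b t R : ℝ} (hb : |b| ≤ R) :
    |(|a + t * b| - |a| - t * signedPow 1 a * b)| ≤ 2 * |t| * R := by
  have hdiff : |(|a + t * b| - |a|)| ≤ |t| * R :=
    calc _ ≤ |a + t * b - a| := abs_abs_sub_abs_le_abs_sub _ _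
      _ = |t| * |b| := by rw [add_sub_cancel_left, abs_mul]
      _ ≤ |t| * R := by gcongr
  have hlin : |t * signedPow 1 a * b| ≤ |t| * R :=
    calc _ = |t| * |signedPow 1 a| * |b| := by rw [abs_mul, abs_mul]
      _ ≤ |t| * 1 * R := by gcongr; exact abs_signedPow_one_le a
      _ = |t| * R := by rw [mul_one]
  linarith [abs_sub (|a + t * b| - |a|) (t * signedPow 1 a * b)]

lemma abs_rpow_remainder_le_of_le_two {p : ℝ} (hp1 : 1 < p) (hp2 : p ≤ 2) {a b t R : ℝ}
    (hR : 0 ≤ R) (hb : |b| ≤ R) :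
    |(|a + t * b| ^ p - |a| ^ p - p * t * signedPow p a * b)| ≤ 2 * p * |t| ^ p * R ^ p := by
  have hD (s : ℝ) (hs : |s| ≤ |t|) :
      |signedPow p (a + s * b) - signedPow p a| ≤ 2 * (|t| * R) ^ (p - 1) :=
    calc _ ≤ 2 * |s * b| ^ (p - 1) := by
          simpa using abs_signedPow_sub_le_two_mul_rpow hp1 hp2 (a + s * b) a
      _ ≤ 2 * (|t| * R) ^ (p - 1) := by
          rw [abs_mul]
          gcongr
  have hpow (x : ℝ) (hx : 0 ≤ x) : x ^ (p - 1) * x = x ^ p := by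
    rw [← rpow_add_one' hx (by linarith), sub_add_cancel]
  calc _ ≤ p * |b| * (2 * (|t| * R) ^ (p - 1)) * |t| := abs_rpow_remainder_le hp1 hD
    _ ≤ p * R * (2 * (|t| * R) ^ (p - 1)) * |t| := by gcongr
    _ = 2 * p * |t| ^ p * R ^ p := by
      rw [mul_rpow (abs_nonneg t) hR, ← hpow |t| (abs_nonneg t), ← hpow R hR]
      ring

lemma abs_rpow_remainder_le_of_two_le {p : ℝ} (hp : 2 ≤ p) {a b t R : ℝ} (ha : |a| ≤ R)
    (hb : |b| ≤ R) (ht : |t| ≤ 1) :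
    |(|a + t * b| ^ p - |a| ^ p - p * t * signedPow p a * b)| ≤
      p * (p - 1) * 2 ^ (p - 2) * |t| ^ 2 * R ^ p := by
  have hR : 0 ≤ R := (abs_nonneg a).trans ha
  have hp1 : 0 ≤ p - 1 := by linarith
  have hD (s : ℝ) (hs : |s| ≤ |t|) :
      |signedPow p (a + s * b) - signedPow p a| ≤ (p - 1) * (2 * R) ^ (p - 2) * (|t| * R) := by
    have hsb : |s * b| ≤ |t| * R := by
      rw [abs_mul]
      gcongr
    have hmax : max |a + s * b| |a| ≤ 2 * R :=
      max_le (by linarith [abs_add_le a (s * b), mul_le_of_le_one_left hR ht]) (by linarith)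
    calc _ ≤ (p - 1) * max |a + s * b| |a| ^ (p - 2) * |a + s * b - a| :=
          abs_signedPow_sub_le_mul_max_rpow hp _ _
      _ ≤ _ := by
          rw [add_sub_cancel_left]
          gcongr
  have hpow : R ^ (p - 2) * R ^ 2 = R ^ p := by
    rw [← rpow_two, ← rpow_add' hR (by linarith), sub_add_cancel]
  calc _ ≤ p * |b| * ((p - 1) * (2 * R) ^ (p - 2) * (|t| * R)) * |t| :=
        abs_rpow_remainder_le (by linarith) hD
    _ ≤ p * R * ((p - 1) * (2 * R) ^ (p - 2) * (|t| * R)) * |t| := by gcongr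
    _ = p * (p - 1) * 2 ^ (p - 2) * |t| ^ 2 * R ^ p := by
      rw [mul_rpow (by norm_num) hR, ← hpow]
      ring

/-- For `p ∈ [1,∞)` there is `C = C(p) > 0` such that for all
`R > 0`, `|a| ≤ R`, `|b| ≤ R` and `|t| ≤ 1`:
`| |a+tb|^p - |a|^p - p t |a|^{p-2} a b | ≤ C |t|^{min(p,2)} R^p`. -/
theorem stmt_15 (p : ℝ) (hp : 1 ≤ p) :
    ∃ C : ℝ, 0 < C ∧
      ∀ R : ℝ, 0 < R → ∀ a b : ℝ, |a| ≤ R → |b| ≤ R → ∀ t : ℝ, |t| ≤ 1 →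
        |(|a + t * b| ^ p - |a| ^ p - p * t * (|a| ^ (p - 2) * a) * b)| ≤
          C * |t| ^ min p 2 * R ^ p := by
  have hLip : 0 ≤ p * (p - 1) * 2 ^ (p - 2) := by
    have : 0 ≤ p - 1 := by linarith
    positivity
  refine ⟨2 * p + p * (p - 1) * 2 ^ (p - 2), by linarith, fun R hR a b ha hb t ht ↦ ?_⟩
  suffices ∃ C ≤ 2 * p + p * (p - 1) * 2 ^ (p - 2),
      |(|a + t * b| ^ p - |a| ^ p - p * t * signedPow p a * b)| ≤ C * |t| ^ min p 2 * R ^ p by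
    obtain ⟨C, hC, h⟩ := this
    exact h.trans (by gcongr)
  rcases hp.eq_or_lt with rfl | hp1
  · refine ⟨2, by linarith, ?_⟩
    simpa using abs_abs_remainder_le (a := a) (t := t) hb
  rcases le_total p 2 with hp2 | hp2
  · refine ⟨2 * p, by linarith, ?_⟩
    rw [min_eq_left hp2]
    exact abs_rpow_remainder_le_of_le_two hp1 hp2 hR.le hb
  · refine ⟨p * (p - 1) * 2 ^ (p - 2), by linarith, ?_⟩
    rw [min_eq_right hp2, rpow_two]
    exact abs_rpow_remainder_le_of_two_le hp2 ha hb ht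
end
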